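/- arXiv:2209.00285 — 8 statements merged into one kernel-verified Lean document; each statement's English description precedes it below -/
import Mathlib

section
/- Let (h_n) and (a_n) be sequences of nonnegative real numbers and let C > 0 and α ≥ 0. Assume that for every r ∈ [0,1) the family (a_n · r^{h_n})_n is summable with ∑_n a_n · r^{h_n} ≤ C·(1−r)^{−α}. Then for every Schwartz function φ : ℝ → ℂ: (i) the family (a_n · ∫_ℝ exp(i·h_n·θ)·φ(θ) dθ)_n is summable; and (ii) ∫_ℝ (∑'_n a_n · r^{h_n} · exp(i·h_n·θ)) · φ(θ) dθ tends to ∑'_n a_n · ∫_ℝ exp(i·h_n·θ)·φ(θ) dθ as r → 1 from the left. -/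
/-!
`∫ e^{ihθ} φ(θ) dθ` is the Fourier transform of `φ` at `-h/2π`, so it decays faster than any
power of `h`. Integrating `∑ aₙ r^{hₙ} ≤ C (1-r)^{-α}` against `(1-r)^{α+1} dr` over `[0,1]`,
and using `∫₀¹ r^h (1-r)^{α+1} dr ≥ (1+h)^{-(α+2)} / (e (α+2))` (since `r^h ≥ e⁻¹` for
`r ≥ h/(1+h)`), gives `∑ aₙ (1+hₙ)^{-(α+2)} < ∞`. Hence the limit series converges absolutely;
for `r < 1` sum and integral can be exchanged, and dominated convergence for series lets `r → 1⁻`.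
-/

open MeasureTheory Filter FourierTransform Complex Topology
open scoped SchwartzMap

namespace SchwartzMap

variable {E F : Type*} [NormedAddCommGroup E] [NormedSpace ℝ E]
  [NormedAddCommGroup F] [NormedSpace ℝ F]

theorem exists_norm_le_mul_one_add_rpow_neg (f : 𝓢(E, F)) (s : ℝ) :
    ∃ K, ∀ x, ‖f x‖ ≤ K * (1 + ‖x‖) ^ (-s) := by
  set k := ⌈s⌉₊
  set M := 2 ^ k * (Finset.Iic (k, 0)).sup (fun m => SchwartzMap.seminorm ℝ m.1 m.2) f
  refine ⟨M, fun x => ?_⟩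
  have hdecay : (1 + ‖x‖) ^ k * ‖f x‖ ≤ M := by
    simpa only [norm_iteratedFDeriv_zero] using
      one_add_le_sup_seminorm_apply (𝕜 := ℝ) (m := (k, 0)) le_rfl le_rfl f x
  calc ‖f x‖ ≤ M * (1 + ‖x‖) ^ (-(k : ℝ)) := by
        rw [Real.rpow_neg (by positivity), Real.rpow_natCast, ← div_eq_mul_inv,
          le_div_iff₀ (by positivity), mul_comm]
        exact hdecay
    _ ≤ M * (1 + ‖x‖) ^ (-s) := by
        have hM : 0 ≤ M := mul_nonneg (by positivity) (apply_nonneg _ _)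
        gcongr
        · exact le_add_of_nonneg_right (norm_nonneg x)
        · exact Nat.le_ceil s

end SchwartzMap

noncomputable def physFourier (f : ℝ → ℂ) (x : ℝ) : ℂ :=
  ∫ θ : ℝ, cexp (I * x * θ) * f θ

theorem physFourier_eq_fourier (f : ℝ → ℂ) (x : ℝ) :
    physFourier f x = 𝓕 f (-x / (2 * Real.pi)) := by
  rw [physFourier, Real.fourier_real_eq_integral_exp_smul]
  congr 1
  ext θ
  rw [smul_eq_mul]
  congr 2
  push_cast
  field_simp

theorem SchwartzMap.exists_norm_physFourier_le (φ : 𝓢(ℝ, ℂ)) (s : ℝ) :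
    ∃ K, ∀ x, ‖physFourier φ x‖ ≤ K * (1 + |x|) ^ (-s) := by
  let L : ℝ ≃L[ℝ] ℝ := ContinuousLinearEquiv.unitsEquivAut ℝ
    (Units.mk0 (-(2 * Real.pi)⁻¹) (by simp [Real.pi_ne_zero]))
  obtain ⟨K, hK⟩ :=
    (compCLMOfContinuousLinearEquiv ℝ L (𝓕 φ)).exists_norm_le_mul_one_add_rpow_neg s
  refine ⟨K, fun x => ?_⟩
  have hψ : compCLMOfContinuousLinearEquiv ℝ L (𝓕 φ) x = physFourier φ x := by
    simp [physFourier_eq_fourier, L, div_eq_mul_inv, SchwartzMap.fourier_coe]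
  simpa [hψ] using hK x

theorem Real.exp_neg_one_le_div_one_add_rpow {x : ℝ} (hx : 0 ≤ x) :
    Real.exp (-1) ≤ (x / (1 + x)) ^ x := by
  rcases hx.eq_or_lt with rfl | hx
  · simp
  have hr : 0 < x / (1 + x) := by positivity
  rw [Real.rpow_def_of_pos hr, Real.exp_le_exp]
  have hlog := Real.one_sub_inv_le_log_of_pos hr
  rw [inv_div, show 1 - (1 + x) / x = -x⁻¹ by field_simp; ring] at hlog
  calc (-1 : ℝ) = x * -x⁻¹ := by field_simp
    _ ≤ _ := by rw [mul_comm]; exact mul_le_mul_of_nonneg_right hlog hx.le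

theorem integral_one_sub_rpow {a β : ℝ} (hβ : 0 ≤ β) :
    ∫ r in a..1, (1 - r) ^ β = (1 - a) ^ (β + 1) / (β + 1) := by
  rw [intervalIntegral.integral_comp_sub_left (fun u : ℝ => u ^ β), sub_self,
    integral_rpow (Or.inl (by linarith)), Real.zero_rpow (by linarith), sub_zero]

theorem one_add_rpow_neg_le_integral_rpow_mul_one_sub_rpow {x β : ℝ} (hx : 0 ≤ x)
    (hβ : 0 ≤ β) :
    (1 + x) ^ (-(β + 1)) ≤ Real.exp 1 * (β + 1) * ∫ r in (0 : ℝ)..1, r ^ x * (1 - r) ^ β := by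
  set r₀ := x / (1 + x)
  have hr₀ : 0 ≤ r₀ := by positivity
  have hr₀1 : r₀ ≤ 1 := div_le_one_of_le₀ (by linarith) (by positivity)
  have hint : ∀ a b : ℝ, IntervalIntegrable (fun r : ℝ => r ^ x * (1 - r) ^ β) volume a b :=
    fun a b => ((Real.continuous_rpow_const hx).mul
      ((Real.continuous_rpow_const hβ).comp
        (continuous_const.sub continuous_id))).intervalIntegrable a b
  have htail : Real.exp (-1) * ((1 + x) ^ (-(β + 1)) / (β + 1)) ≤
      ∫ r in r₀..1, r ^ x * (1 - r) ^ β := by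
    have h1r₀ : 1 - r₀ = (1 + x)⁻¹ := by simp only [r₀]; field_simp; ring
    rw [Real.rpow_neg (by positivity), ← Real.inv_rpow (by positivity), ← h1r₀,
      ← integral_one_sub_rpow hβ, ← intervalIntegral.integral_const_mul]
    refine intervalIntegral.integral_mono_on hr₀1 ?_ (hint _ _) fun r hr => ?_
    · exact (((Real.continuous_rpow_const hβ).comp
        (continuous_const.sub continuous_id)).const_mul _).intervalIntegrable _ _
    · gcongr
      · exact Real.rpow_nonneg (by linarith [hr.2]) _
      · exact (Real.exp_neg_one_le_div_one_add_rpow hx).trans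
          (Real.rpow_le_rpow hr₀ hr.1 hx)
  have hmono : ∫ r in r₀..1, r ^ x * (1 - r) ^ β ≤ ∫ r in (0 : ℝ)..1, r ^ x * (1 - r) ^ β := by
    refine intervalIntegral.integral_mono_interval hr₀ hr₀1 le_rfl ?_ (hint _ _)
    filter_upwards [ae_restrict_mem measurableSet_Ioc] with r hr
    exact mul_nonneg (Real.rpow_nonneg hr.1.le _) (Real.rpow_nonneg (by linarith [hr.2]) _)
  have hβ1 : 0 < β + 1 := by linarith
  calc (1 + x) ^ (-(β + 1))
      = Real.exp 1 * (β + 1) * (Real.exp (-1) * ((1 + x) ^ (-(β + 1)) / (β + 1))) := by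
        rw [Real.exp_neg]; field_simp
    _ ≤ _ := by gcongr; exact htail.trans hmono

section PowerBound

variable {ι : Type*} {h a : ι → ℝ} {C α : ℝ}

theorem sum_mul_rpow_mul_one_sub_rpow_le (ha : ∀ n, 0 ≤ a n) (hα : -1 < α)
    (hsum : ∀ r ∈ Set.Ico (0:ℝ) 1,
      Summable (fun n => a n * r ^ h n) ∧ ∑' n, a n * r ^ h n ≤ C * (1 - r) ^ (-α))
    (S : Finset ι) {r : ℝ} (hr : r ∈ Set.Icc (0 : ℝ) 1) :
    ∑ n ∈ S, a n * (r ^ h n * (1 - r) ^ (α + 1)) ≤ C * (1 - r) := by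
  simp_rw [← mul_assoc, ← Finset.sum_mul]
  rcases hr.2.eq_or_lt with rfl | hr1
  · simp [Real.zero_rpow (by linarith : α + 1 ≠ 0)]
  obtain ⟨hs, hbound⟩ := hsum r ⟨hr.1, hr1⟩
  have h1r : 0 < 1 - r := by linarith
  calc (∑ n ∈ S, a n * r ^ h n) * (1 - r) ^ (α + 1)
      ≤ C * (1 - r) ^ (-α) * (1 - r) ^ (α + 1) := by
        gcongr
        exact (hs.sum_le_tsum S fun n _ => mul_nonneg (ha n) (Real.rpow_nonneg hr.1 _)).trans
          hbound
    _ = C * (1 - r) := by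
        rw [mul_assoc, ← Real.rpow_add h1r, neg_add_cancel_left, Real.rpow_one]

theorem summable_mul_one_add_rpow_neg_of_tsum_rpow_le (hh : ∀ n, 0 ≤ h n) (ha : ∀ n, 0 ≤ a n)
    (hα : -1 < α)
    (hsum : ∀ r ∈ Set.Ico (0:ℝ) 1,
      Summable (fun n => a n * r ^ h n) ∧ ∑' n, a n * r ^ h n ≤ C * (1 - r) ^ (-α)) :
    Summable (fun n => a n * (1 + h n) ^ (-(α + 2))) := by
  have hβ : 0 ≤ α + 1 := by linarith
  set c := Real.exp 1 * (α + 2)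
  have hc : 0 ≤ c := mul_nonneg (Real.exp_pos 1).le (by linarith)
  refine summable_of_sum_le (c := c * (C / 2))
    (fun n => mul_nonneg (ha n) (Real.rpow_nonneg (by linarith [hh n]) _)) fun S => ?_
  have hcont : ∀ n, Continuous fun r : ℝ => a n * (r ^ h n * (1 - r) ^ (α + 1)) := fun n =>
    continuous_const.mul ((Real.continuous_rpow_const (hh n)).mul
      ((Real.continuous_rpow_const hβ).comp (continuous_const.sub continuous_id)))
  calc ∑ n ∈ S, a n * (1 + h n) ^ (-(α + 2))
      ≤ ∑ n ∈ S, c * ∫ r in (0:ℝ)..1, a n * (r ^ h n * (1 - r) ^ (α + 1)) := by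
        refine Finset.sum_le_sum fun n _ => ?_
        rw [intervalIntegral.integral_const_mul, mul_left_comm]
        exact mul_le_mul_of_nonneg_left (by simpa [c, add_assoc, one_add_one_eq_two] using
            one_add_rpow_neg_le_integral_rpow_mul_one_sub_rpow (hh n) hβ) (ha n)
    _ = c * ∫ r in (0:ℝ)..1, ∑ n ∈ S, a n * (r ^ h n * (1 - r) ^ (α + 1)) := by
        rw [← Finset.mul_sum, intervalIntegral.integral_finsetSum fun n _ =>
          (hcont n).intervalIntegrable _ _]
    _ ≤ c * ∫ r in (0:ℝ)..1, C * (1 - r) := by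
        refine mul_le_mul_of_nonneg_left ?_ hc
        refine intervalIntegral.integral_mono_on zero_le_one ?_ ?_ fun r hr =>
          sum_mul_rpow_mul_one_sub_rpow_le ha hα hsum S hr
        · exact (continuous_finsetSum S fun n _ => hcont n).intervalIntegrable _ _
        · exact (continuous_const.mul (continuous_const.sub continuous_id)).intervalIntegrable _ _
    _ = c * (C / 2) := by
        rw [intervalIntegral.integral_const_mul,
          intervalIntegral.integral_comp_sub_left (fun u : ℝ => u), integral_id]
        ring

end PowerBound

theorem integral_tsum_mul_cexp_mul {ι : Type*} [Countable ι] {f : ℝ → ℂ} (hf : Integrable f)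
    {c : ι → ℂ} (hc : Summable (‖c ·‖)) (h : ι → ℝ) :
    ∫ θ : ℝ, (∑' n, c n * cexp (I * h n * θ)) * f θ = ∑' n, c n * physFourier f (h n) := by
  have hnorm : ∀ n (θ : ℝ), ‖c n * cexp (I * h n * θ) * f θ‖ = ‖c n‖ * ‖f θ‖ := fun n θ => by
    rw [norm_mul, norm_mul, mul_assoc I, ← ofReal_mul, norm_exp_I_mul_ofReal, mul_one]
  have hint : ∀ n, Integrable (fun θ : ℝ => c n * cexp (I * h n * θ) * f θ) := fun n =>
    (hf.norm.const_mul ‖c n‖).mono' (by fun_prop) (.of_forall (hnorm n · |>.le))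
  calc ∫ θ : ℝ, (∑' n, c n * cexp (I * h n * θ)) * f θ
      = ∫ θ : ℝ, ∑' n, c n * cexp (I * h n * θ) * f θ := by simp_rw [tsum_mul_right]
    _ = ∑' n, ∫ θ : ℝ, c n * cexp (I * h n * θ) * f θ := by
        refine (integral_tsum_of_summable_integral_norm hint ?_).symm
        simp_rw [hnorm, integral_const_mul]
        exact hc.mul_right _
    _ = ∑' n, c n * physFourier f (h n) := tsum_congr fun n => by
        rw [physFourier, ← integral_const_mul]
        simp_rw [mul_assoc]

theorem tendsto_tsum_rpow_smul_nhdsLT_one {ι E : Type*} [NormedAddCommGroup E] [NormedSpace ℝ E]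
    [CompleteSpace E] {h : ι → ℝ} (hh : ∀ n, 0 ≤ h n) {b : ι → E} (hb : Summable (‖b ·‖)) :
    Tendsto (fun r : ℝ => ∑' n, r ^ h n • b n) (𝓝[<] 1) (𝓝 (∑' n, b n)) := by
  refine tendsto_tsum_of_dominated_convergence hb (fun n => ?_) ?_
  · simpa using ((Real.continuousAt_rpow_const 1 (h n) (Or.inl one_ne_zero)).tendsto.smul_const
      (b n)).mono_left nhdsWithin_le_nhds
  · filter_upwards [Ico_mem_nhdsLT zero_lt_one] with r hr n
    rw [norm_smul, Real.norm_of_nonneg (Real.rpow_nonneg hr.1 _)]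
    exact mul_le_of_le_one_left (norm_nonneg _) (Real.rpow_le_one hr.1 hr.2.le (hh n))

theorem cb_expansion_boundary_distributional_convergence_1d_general
    (h a : ℕ → ℝ) (hh : ∀ n, 0 ≤ h n) (ha : ∀ n, 0 ≤ a n)
    (C α : ℝ) (hα : 0 ≤ α)
    (hsum : ∀ r ∈ Set.Ico (0:ℝ) 1,
      Summable (fun n => a n * r ^ h n) ∧
      ∑' n, a n * r ^ h n ≤ C * (1 - r) ^ (-α))
    (φ : SchwartzMap ℝ ℂ) :
    Summable (fun n => (a n : ℂ) *
        ∫ θ : ℝ, Complex.exp (Complex.I * (h n : ℂ) * (θ : ℂ)) * φ θ) ∧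
    Tendsto (fun r : ℝ =>
        ∫ θ : ℝ,
          (∑' n, ((a n * r ^ h n : ℝ) : ℂ) *
            Complex.exp (Complex.I * (h n : ℂ) * (θ : ℂ))) * φ θ)
      (nhdsWithin 1 (Set.Iio 1))
      (nhds (∑' n, (a n : ℂ) *
        ∫ θ : ℝ, Complex.exp (Complex.I * (h n : ℂ) * (θ : ℂ)) * φ θ)) := by
  obtain ⟨K, hK⟩ := φ.exists_norm_physFourier_le (α + 2)
  have hdom : Summable fun n => ‖(a n : ℂ) * physFourier φ (h n)‖ := by
    refine ((summable_mul_one_add_rpow_neg_of_tsum_rpow_le hh ha (by linarith) hsum).mul_left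
      K).of_nonneg_of_le (fun n => norm_nonneg _) fun n => ?_
    rw [norm_mul, norm_real, Real.norm_of_nonneg (ha n), mul_left_comm]
    simpa [abs_of_nonneg (hh n)] using mul_le_mul_of_nonneg_left (hK (h n)) (ha n)
  refine ⟨hdom.of_norm, (tendsto_tsum_rpow_smul_nhdsLT_one hh hdom).congr' ?_⟩
  filter_upwards [Ico_mem_nhdsLT zero_lt_one] with r hr
  have hcoeff : Summable fun n => ‖((a n * r ^ h n : ℝ) : ℂ)‖ := by
    simpa [norm_real, abs_of_nonneg (ha _), abs_of_nonneg (Real.rpow_nonneg hr.1 _)]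
      using (hsum r hr).1
  rw [integral_tsum_mul_cexp_mul φ.integrable hcoeff]
  refine tsum_congr fun n => ?_
  rw [real_smul, ofReal_mul]
  ring

/-- Distributional convergence of the conformal block expansion on the boundary
of the unit disk (one cross-ratio, `d = 1` case). -/
theorem cb_expansion_boundary_distributional_convergence_1d
    (h a : ℕ → ℝ) (hh : ∀ n, 0 ≤ h n) (ha : ∀ n, 0 ≤ a n)
    (C α : ℝ) (hC : 0 < C) (hα : 0 ≤ α)
    (hsum : ∀ r ∈ Set.Ico (0:ℝ) 1,
      Summable (fun n => a n * r ^ h n) ∧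
      ∑' n, a n * r ^ h n ≤ C * (1 - r) ^ (-α))
    (φ : SchwartzMap ℝ ℂ) :
    Summable (fun n => (a n : ℂ) *
        ∫ θ : ℝ, Complex.exp (Complex.I * (h n : ℂ) * (θ : ℂ)) * φ θ) ∧
    Tendsto (fun r : ℝ =>
        ∫ θ : ℝ,
          (∑' n, ((a n * r ^ h n : ℝ) : ℂ) *
            Complex.exp (Complex.I * (h n : ℂ) * (θ : ℂ))) * φ θ)
      (nhdsWithin 1 (Set.Iio 1))
      (nhds (∑' n, (a n : ℂ) *
        ∫ θ : ℝ, Complex.exp (Complex.I * (h n : ℂ) * (θ : ℂ)) * φ θ)) :=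
  cb_expansion_boundary_distributional_convergence_1d_general h a hh ha C α hα hsum φ
end

section
/- Let (h_n), (h̄_n) and (a_n) be sequences of nonnegative real numbers and let C > 0 and α ≥ 0. Assume that for all r, r̄ ∈ [0,1) the family (a_n · r^{h_n} · r̄^{h̄_n})_n is summable with ∑_n a_n · r^{h_n} · r̄^{h̄_n} ≤ C·(1−r)^{−α}·(1−r̄)^{−α}. Then for every Schwartz function φ : ℝ² → ℂ: (i) the family (a_n · ∫_{ℝ²} exp(i·h_n·θ + i·h̄_n·θ̄)·φ(θ,θ̄) dθ dθ̄)_n is summable; and (ii) the double integral ∫_{ℝ²} (∑'_n a_n · r^{h_n} · r̄^{h̄_n} · exp(i·h_n·θ + i·h̄_n·θ̄)) · φ(θ,θ̄) dθ dθ̄ tends to ∑'_n a_n · ∫_{ℝ²} exp(i·h_n·θ + i·h̄_n·θ̄)·φ(θ,θ̄) dθ dθ̄ in the joint limit r → 1⁻, r̄ → 1⁻. -/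
open MeasureTheory Filter Topology
open scoped FourierTransform

/-!
The test integrals `F n = ∫ exp (i (h n θ + hb n θ̄)) φ` are values of the Fourier transform of
the Schwartz function `φ` (transported to `ℂ`), so `|F n| = O((1 + h n + hb n)⁻ᵏ)` for every `k`.
Evaluating the power-law bound at `r = rb = exp (-1/M)` gives
`∑ a n exp (-(h n + hb n) / M) = O(M ^ (2α))`, and decomposing the indices into the layers
`⌈h n + hb n⌉ = m` turns this into `∑ a n (1 + h n + hb n)⁻ᵏ < ∞` for `k > 2α + 1`.
Hence `∑ a n |F n| < ∞`. For `r, rb < 1` the series can be integrated termwise, and the limit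
`r, rb → 1⁻` is dominated convergence for series, with dominating sequence `a n |F n|`.
-/

theorem SchwartzMap.exists_one_add_norm_pow_mul_le {V F : Type*} [NormedAddCommGroup V]
    [NormedSpace ℝ V] [NormedAddCommGroup F] [NormedSpace ℝ F] (f : SchwartzMap V F) (k : ℕ) :
    ∃ D, ∀ x, (1 + ‖x‖) ^ k * ‖f x‖ ≤ D :=
  ⟨_, fun x => by
    simpa using one_add_le_sup_seminorm_apply (𝕜 := ℝ) (m := (k, 0)) le_rfl le_rfl f x⟩

theorem integral_exp_mul_eq_fourier (φ : SchwartzMap (ℝ × ℝ) ℂ) (s t : ℝ) :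
    ∫ p : ℝ × ℝ, Complex.exp (Complex.I * s * p.1 + Complex.I * t * p.2) * φ p =
      𝓕 (φ.compCLMOfContinuousLinearEquiv ℝ Complex.equivRealProdCLM)
        ((-(2 * Real.pi)⁻¹) • (⟨s, t⟩ : ℂ)) := by
  rw [SchwartzMap.fourier_coe, Real.fourier_eq',
    ← Complex.volume_preserving_equiv_real_prod.integral_comp
      Complex.measurableEquivRealProd.measurableEmbedding]
  refine integral_congr_ae (Eventually.of_forall fun z => ?_)
  have hphase : -2 * Real.pi * inner ℝ z ((-(2 * Real.pi)⁻¹) • (⟨s, t⟩ : ℂ)) =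
      s * z.re + t * z.im := by
    rw [real_inner_smul_right, Complex.inner]
    field_simp
    simp only [Complex.mul_re, Complex.conj_re, Complex.conj_im]
    ring
  simp only [hphase, smul_eq_mul, SchwartzMap.compCLMOfContinuousLinearEquiv_apply,
    Function.comp_apply]
  congr 2
  change Complex.I * s * z.re + Complex.I * t * z.im = _
  push_cast
  ring

theorem exists_norm_integral_exp_mul_le (φ : SchwartzMap (ℝ × ℝ) ℂ) (k : ℕ) :
    ∃ D, ∀ s t : ℝ,
      ‖∫ p : ℝ × ℝ, Complex.exp (Complex.I * s * p.1 + Complex.I * t * p.2) * φ p‖ *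
        (1 + (|s| + |t|)) ^ k ≤ D := by
  set ψ := φ.compCLMOfContinuousLinearEquiv ℝ Complex.equivRealProdCLM
  obtain ⟨D, hD⟩ := (𝓕 ψ).exists_one_add_norm_pow_mul_le k
  refine ⟨(4 * Real.pi) ^ k * D, fun s t => ?_⟩
  set ξ : ℂ := (-(2 * Real.pi)⁻¹) • (⟨s, t⟩ : ℂ)
  have hξ : 1 + (|s| + |t|) ≤ 4 * Real.pi * (1 + ‖ξ‖) := by
    have hnorm : 2 * Real.pi * ‖ξ‖ = ‖(⟨s, t⟩ : ℂ)‖ := by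
      rw [norm_smul, norm_neg, norm_inv, Real.norm_of_nonneg (by positivity)]
      field_simp
    have hst : |s| + |t| ≤ 2 * (2 * Real.pi * ‖ξ‖) := by
      rw [hnorm]
      linarith [Complex.abs_re_le_norm ⟨s, t⟩, Complex.abs_im_le_norm ⟨s, t⟩]
    nlinarith [Real.pi_gt_three, norm_nonneg ξ]
  rw [integral_exp_mul_eq_fourier, SchwartzMap.fourier_coe]
  calc ‖𝓕 (ψ : ℂ → ℂ) ξ‖ * (1 + (|s| + |t|)) ^ k
      ≤ ‖𝓕 (ψ : ℂ → ℂ) ξ‖ * (4 * Real.pi * (1 + ‖ξ‖)) ^ k := by gcongr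
    _ = (4 * Real.pi) ^ k * ((1 + ‖ξ‖) ^ k * ‖𝓕 ψ ξ‖) := by
      rw [mul_pow, SchwartzMap.fourier_coe]; ring
    _ ≤ (4 * Real.pi) ^ k * D := by gcongr; exact hD ξ

theorem Real.div_two_le_one_sub_exp_neg {u : ℝ} (hu0 : 0 ≤ u) (hu1 : u ≤ 1) :
    u / 2 ≤ 1 - Real.exp (-u) := by
  have h : Real.exp (-u) * (1 + u) ≤ 1 := by
    calc Real.exp (-u) * (1 + u) ≤ Real.exp (-u) * Real.exp u := by
          gcongr; linarith [Real.add_one_le_exp u]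
      _ = 1 := by rw [← Real.exp_add, neg_add_cancel, Real.exp_zero]
  nlinarith [Real.exp_pos (-u)]

theorem tsum_mul_exp_neg_div_le_of_tsum_mul_rpow_le {ι : Type*} {h hb a : ι → ℝ} {C α : ℝ}
    (hC : 0 ≤ C) (hα : 0 ≤ α)
    (hsum : ∀ r ∈ Set.Ico (0:ℝ) 1, ∀ rb ∈ Set.Ico (0:ℝ) 1,
      Summable (fun n => a n * r ^ h n * rb ^ hb n) ∧
      ∑' n, a n * r ^ h n * rb ^ hb n ≤ C * (1 - r) ^ (-α) * (1 - rb) ^ (-α))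
    {M : ℝ} (hM : 1 ≤ M) :
    Summable (fun n => a n * Real.exp (-((h n + hb n) / M))) ∧
      ∑' n, a n * Real.exp (-((h n + hb n) / M)) ≤ C * 2 ^ α * 2 ^ α * M ^ (α + α) := by
  have hM0 : 0 < M := by linarith
  set r := Real.exp (-M⁻¹)
  have hr : r ∈ Set.Ico (0:ℝ) 1 :=
    ⟨(Real.exp_pos _).le, Real.exp_lt_one_iff.2 (by simpa using hM0)⟩
  have hterm : ∀ n, a n * r ^ h n * r ^ hb n = a n * Real.exp (-((h n + hb n) / M)) := by
    intro n
    rw [mul_assoc, ← Real.exp_mul, ← Real.exp_mul, ← Real.exp_add]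
    ring_nf
  have hgap : (1 - r) ^ (-α) ≤ 2 ^ α * M ^ α := by
    have hhalf : (2 * M)⁻¹ ≤ 1 - r := by
      have := Real.div_two_le_one_sub_exp_neg (inv_nonneg.2 hM0.le) (inv_le_one_of_one_le₀ hM)
      rwa [div_eq_mul_inv, ← mul_inv, mul_comm] at this
    calc (1 - r) ^ (-α) ≤ ((2 * M)⁻¹) ^ (-α) :=
          Real.rpow_le_rpow_of_nonpos (by positivity) hhalf (neg_nonpos.2 hα)
      _ = 2 ^ α * M ^ α := by
          rw [Real.inv_rpow (by positivity), ← Real.rpow_neg (by positivity), neg_neg,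
            Real.mul_rpow (by norm_num) hM0.le]
  obtain ⟨hS, hle⟩ := hsum r hr r hr
  simp only [hterm] at hS hle
  refine ⟨hS, hle.trans ?_⟩
  calc C * (1 - r) ^ (-α) * (1 - r) ^ (-α) ≤ C * (2 ^ α * M ^ α) * (2 ^ α * M ^ α) := by
        have : 0 ≤ (1 - r) ^ (-α) := Real.rpow_nonneg (by linarith [hr.2]) _
        gcongr
    _ = C * 2 ^ α * 2 ^ α * M ^ (α + α) := by rw [Real.rpow_add hM0]; ring

theorem inv_one_add_pow_le_mul_exp_neg_div {x : ℝ} (hx : 0 ≤ x) (k : ℕ) :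
    ((1 + x) ^ k)⁻¹ ≤
      Real.exp 1 * 2 ^ k * ((⌈x⌉₊ + 1 : ℝ) ^ k)⁻¹ * Real.exp (-(x / (⌈x⌉₊ + 1))) := by
  have hceil : (⌈x⌉₊ : ℝ) < x + 1 := Nat.ceil_lt_add_one hx
  have hpow : ((⌈x⌉₊ + 1 : ℝ) ^ k) ≤ 2 ^ k * (1 + x) ^ k := by
    rw [← mul_pow]; gcongr; linarith
  have hexp : Real.exp (-1) ≤ Real.exp (-(x / (⌈x⌉₊ + 1))) := by
    gcongr
    rw [div_le_one (by positivity)]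
    linarith [Nat.le_ceil x]
  calc ((1 + x) ^ k)⁻¹ = Real.exp 1 * 2 ^ k * (2 ^ k * (1 + x) ^ k)⁻¹ * Real.exp (-1) := by
        rw [Real.exp_neg]; field_simp
    _ ≤ _ := by gcongr

/-- On the layer `⌈x n⌉₊ = m` one has `exp (-(x n / (m + 1))) ≥ e⁻¹`, so summing the hypothesis
at `M = m + 1` over the layers gives a `p`-series with exponent `β - k < -1`. -/
theorem summable_mul_inv_one_add_pow_of_tsum_mul_exp_le {ι : Type*} {a x : ι → ℝ}
    (ha : ∀ n, 0 ≤ a n) (hx : ∀ n, 0 ≤ x n) {B β : ℝ} {k : ℕ} (hk : β + 1 < k)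
    (hbound : ∀ M : ℝ, 1 ≤ M → Summable (fun n => a n * Real.exp (-(x n / M))) ∧
      ∑' n, a n * Real.exp (-(x n / M)) ≤ B * M ^ β) :
    Summable (fun n => a n * ((1 + x n) ^ k)⁻¹) := by
  let G : ℕ × ι → ℝ := fun p =>
    Real.exp 1 * 2 ^ k * ((p.1 + 1 : ℝ) ^ k)⁻¹ * (a p.2 * Real.exp (-(x p.2 / (p.1 + 1))))
  have hG_nonneg : 0 ≤ G := fun p => by positivity [ha p.2]
  have hlayer (m : ℕ) := hbound (m + 1) (by simp)
  have hpseries : Summable (fun m : ℕ => ((m + 1 : ℝ) ^ k)⁻¹ * (m + 1 : ℝ) ^ β) := by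
    refine ((summable_nat_add_iff 1).2
      (Real.summable_nat_rpow.2 (show β - k < -1 by linarith))).congr fun m => ?_
    push_cast
    rw [Real.rpow_sub (by positivity), Real.rpow_natCast, div_eq_inv_mul]
  have hG : Summable G := by
    refine (summable_prod_of_nonneg hG_nonneg).2
      ⟨fun m => (hlayer m).1.mul_left (Real.exp 1 * 2 ^ k * ((m + 1 : ℝ) ^ k)⁻¹), ?_⟩
    refine (hpseries.mul_left (Real.exp 1 * 2 ^ k * B)).of_nonneg_of_le
      (fun m => tsum_nonneg fun n => hG_nonneg _) fun m => ?_
    simp only [G]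
    rw [tsum_mul_left]
    calc _ ≤ Real.exp 1 * 2 ^ k * ((m + 1 : ℝ) ^ k)⁻¹ * (B * (m + 1 : ℝ) ^ β) := by
          gcongr; exact (hlayer m).2
      _ = _ := by ring
  have hinj : Function.Injective (fun n : ι => (⌈x n⌉₊, n)) := fun n n' h => (Prod.ext_iff.1 h).2
  refine (hG.comp_injective hinj).of_nonneg_of_le (fun n => by positivity [ha n, hx n])
    fun n => ?_
  calc a n * ((1 + x n) ^ k)⁻¹
      ≤ a n * (Real.exp 1 * 2 ^ k * ((⌈x n⌉₊ + 1 : ℝ) ^ k)⁻¹ *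
          Real.exp (-(x n / (⌈x n⌉₊ + 1)))) := by
        gcongr
        · exact ha n
        · exact inv_one_add_pow_le_mul_exp_neg_div (hx n) k
    _ = G (⌈x n⌉₊, n) := by simp only [G]; ring

theorem integral_tsum_mul_mul {α ι : Type*} [MeasurableSpace α] {μ : Measure α} [Countable ι]
    {c : ι → ℂ} (hc : Summable (‖c ·‖)) {e : ι → α → ℂ}
    (he_meas : ∀ n, AEStronglyMeasurable (e n) μ) (he : ∀ n x, ‖e n x‖ ≤ 1)
    {φ : α → ℂ} (hφ : Integrable φ μ) :
    ∫ x, (∑' n, c n * e n x) * φ x ∂μ = ∑' n, c n * ∫ x, e n x * φ x ∂μ := by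
  have hint (n : ι) : Integrable (fun x => c n * (e n x * φ x)) μ :=
    (hφ.bdd_mul (he_meas n) (Eventually.of_forall (he n))).const_mul _
  have hnorm (n : ι) : ∫ x, ‖c n * (e n x * φ x)‖ ∂μ ≤ ‖c n‖ * ∫ x, ‖φ x‖ ∂μ := by
    rw [← integral_const_mul]
    refine integral_mono (hint n).norm (hφ.norm.const_mul _) fun x => ?_
    rw [norm_mul, norm_mul]
    gcongr
    exact mul_le_of_le_one_left (norm_nonneg _) (he n x)
  simp_rw [← integral_const_mul, ← tsum_mul_right, mul_assoc]
  exact (integral_tsum_of_summable_integral_norm hint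
    ((hc.mul_right _).of_nonneg_of_le (fun n => integral_nonneg fun x => norm_nonneg _) hnorm)).symm

theorem tendsto_tsum_ofReal_mul_rpow_mul_rpow {ι : Type*} {h hb a : ι → ℝ}
    (hh : ∀ n, 0 ≤ h n) (hhb : ∀ n, 0 ≤ hb n) (ha : ∀ n, 0 ≤ a n) {F : ι → ℂ}
    (hF : Summable (fun n => a n * ‖F n‖)) :
    Tendsto (fun r : ℝ × ℝ => ∑' n, ((a n * r.1 ^ h n * r.2 ^ hb n : ℝ) : ℂ) * F n)
      (𝓝[<] 1 ×ˢ 𝓝[<] 1) (𝓝 (∑' n, (a n : ℂ) * F n)) := by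
  refine tendsto_tsum_of_dominated_convergence hF (fun n => ?_) ?_
  · have hcont : ContinuousAt (fun r : ℝ × ℝ => a n * r.1 ^ h n * r.2 ^ hb n) (1, 1) := by
      fun_prop (disch := simp)
    have hle : 𝓝[<] (1 : ℝ) ×ˢ 𝓝[<] 1 ≤ 𝓝 ((1 : ℝ), (1 : ℝ)) := by
      rw [nhds_prod_eq]; exact prod_mono nhdsWithin_le_nhds nhdsWithin_le_nhds
    simpa using
      ((Complex.continuous_ofReal.continuousAt.comp hcont).tendsto.mono_left hle).mul_const (F n)
  · filter_upwards [prod_mem_prod (Ico_mem_nhdsLT zero_lt_one) (Ico_mem_nhdsLT zero_lt_one)]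
      with r ⟨hr1, hr2⟩ n
    rw [norm_mul, Complex.norm_real, Real.norm_of_nonneg (by positivity [ha n, hr1.1, hr2.1])]
    gcongr
    have ha' := ha n
    have h1 := Real.rpow_nonneg hr1.1 (h n)
    have h2 := Real.rpow_nonneg hr2.1 (hb n)
    have h1' := Real.rpow_le_one hr1.1 hr1.2.le (hh n)
    have h2' := Real.rpow_le_one hr2.1 hr2.2.le (hhb n)
    calc a n * r.1 ^ h n * r.2 ^ hb n ≤ a n * 1 * 1 := by gcongr
      _ = a n := by ring

/-- Distributional convergence of the conformal block expansion on the boundary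
of the unit polydisk (two cross-ratios, `d ≥ 2` case). -/
theorem cb_expansion_boundary_distributional_convergence_2d
    (h hb a : ℕ → ℝ) (hh : ∀ n, 0 ≤ h n) (hhb : ∀ n, 0 ≤ hb n) (ha : ∀ n, 0 ≤ a n)
    (C α : ℝ) (hC : 0 < C) (hα : 0 ≤ α)
    (hsum : ∀ r ∈ Set.Ico (0:ℝ) 1, ∀ rb ∈ Set.Ico (0:ℝ) 1,
      Summable (fun n => a n * r ^ h n * rb ^ hb n) ∧
      ∑' n, a n * r ^ h n * rb ^ hb n ≤ C * (1 - r) ^ (-α) * (1 - rb) ^ (-α))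
    (φ : SchwartzMap (ℝ × ℝ) ℂ) :
    Summable (fun n => (a n : ℂ) *
        ∫ p : ℝ × ℝ,
          Complex.exp (Complex.I * (h n : ℂ) * (p.1 : ℂ) +
            Complex.I * (hb n : ℂ) * (p.2 : ℂ)) * φ p) ∧
    Tendsto (fun r : ℝ × ℝ =>
        ∫ p : ℝ × ℝ,
          (∑' n, ((a n * r.1 ^ h n * r.2 ^ hb n : ℝ) : ℂ) *
            Complex.exp (Complex.I * (h n : ℂ) * (p.1 : ℂ) +
              Complex.I * (hb n : ℂ) * (p.2 : ℂ))) * φ p)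
      ((nhdsWithin 1 (Set.Iio 1)) ×ˢ (nhdsWithin 1 (Set.Iio 1)))
      (nhds (∑' n, (a n : ℂ) *
        ∫ p : ℝ × ℝ,
          Complex.exp (Complex.I * (h n : ℂ) * (p.1 : ℂ) +
            Complex.I * (hb n : ℂ) * (p.2 : ℂ)) * φ p)) := by
  obtain ⟨k, hk⟩ := exists_nat_gt (α + α + 1)
  obtain ⟨D, hD⟩ := exists_norm_integral_exp_mul_le φ k
  set F : ℕ → ℂ := fun n => ∫ p : ℝ × ℝ,
    Complex.exp (Complex.I * (h n : ℂ) * (p.1 : ℂ) + Complex.I * (hb n : ℂ) * (p.2 : ℂ)) * φ p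
  have hweights : Summable (fun n => a n * ((1 + (h n + hb n)) ^ k)⁻¹) :=
    summable_mul_inv_one_add_pow_of_tsum_mul_exp_le ha (fun n => add_nonneg (hh n) (hhb n)) hk
      fun M hM => tsum_mul_exp_neg_div_le_of_tsum_mul_rpow_le hC.le hα hsum hM
  have hdom : Summable (fun n => a n * ‖F n‖) := by
    refine (hweights.mul_left D).of_nonneg_of_le (fun n => by positivity [ha n]) fun n => ?_
    have hFn : ‖F n‖ ≤ D * ((1 + (h n + hb n)) ^ k)⁻¹ := by
      rw [le_mul_inv_iff₀ (by positivity [hh n, hhb n])]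
      simpa only [abs_of_nonneg (hh n), abs_of_nonneg (hhb n)] using hD (h n) (hb n)
    calc a n * ‖F n‖ ≤ a n * (D * ((1 + (h n + hb n)) ^ k)⁻¹) := by gcongr; exact ha n
      _ = D * (a n * ((1 + (h n + hb n)) ^ k)⁻¹) := by ring
  refine ⟨hdom.of_norm_bounded fun n => ?_, ?_⟩
  · rw [norm_mul, Complex.norm_real, Real.norm_of_nonneg (ha n)]
  refine (tendsto_tsum_ofReal_mul_rpow_mul_rpow hh hhb ha hdom).congr' ?_
  filter_upwards [prod_mem_prod (Ico_mem_nhdsLT zero_lt_one) (Ico_mem_nhdsLT zero_lt_one)]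
    with r ⟨hr1, hr2⟩
  have hc : Summable (fun n => ‖((a n * r.1 ^ h n * r.2 ^ hb n : ℝ) : ℂ)‖) :=
    (hsum r.1 hr1 r.2 hr2).1.congr fun n => by
      rw [Complex.norm_real, Real.norm_of_nonneg (by positivity [ha n, hr1.1, hr2.1])]
  refine (integral_tsum_mul_mul hc (fun n => Continuous.aestronglyMeasurable (by fun_prop))
    (fun n p => ?_) φ.integrable).symm
  simp [Complex.norm_exp]
end

section
/- Let φ : ℂ → ℂ be holomorphic on the open unit disk 𝔻 = {w : ℂ | ‖w‖ < 1}, mapping 𝔻 into the closed unit disk (‖φ(w)‖ ≤ 1 for all w ∈ 𝔻), and suppose ‖φ(0)‖ < 1. Then for every w ∈ 𝔻, 1 − ‖w‖ ≤ C · (1 − ‖φ(w)‖), where C = 2·(1 + ‖φ(0)‖)/(1 − ‖φ(0)‖). -/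
/-!
Put `a = φ 0`. The disk automorphism `z ↦ (z - a) / (1 - conj a * z)` maps the closed disk into
itself, so composing it with `φ` gives a self-map of the disk fixing `0`, and the Schwarz lemma
yields `‖φ w - a‖ ≤ ‖w‖ * ‖1 - conj a * φ w‖`. Together with the identity
`‖1 - conj a * b‖² - ‖b - a‖² = (1 - ‖a‖²) (1 - ‖b‖²)` and `‖1 - conj a * b‖ ≥ 1 - ‖a‖` this gives
`(1 - ‖w‖²) (1 - ‖a‖)² ≤ (1 - ‖a‖²) (1 - ‖φ w‖²)`, from which the bound follows.
-/

open Complex ComplexConjugate Metric Set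

namespace Complex

theorem norm_one_sub_conj_mul_sq_sub_norm_sub_sq (a b : ℂ) :
    ‖1 - conj a * b‖ ^ 2 - ‖b - a‖ ^ 2 = (1 - ‖a‖ ^ 2) * (1 - ‖b‖ ^ 2) := by
  apply ofReal_injective
  push_cast
  simp only [← mul_conj', map_sub, map_mul, map_one, conj_conj]
  ring

theorem one_sub_norm_le_norm_one_sub_conj_mul {a b : ℂ} (hb : ‖b‖ ≤ 1) :
    1 - ‖a‖ ≤ ‖1 - conj a * b‖ :=
  calc 1 - ‖a‖ ≤ 1 - ‖a‖ * ‖b‖ := by gcongr; exact mul_le_of_le_one_right (norm_nonneg a) hb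
    _ = ‖(1 : ℂ)‖ - ‖conj a * b‖ := by simp
    _ ≤ ‖1 - conj a * b‖ := norm_sub_norm_le _ _

theorem norm_sub_le_norm_one_sub_conj_mul {a b : ℂ} (ha : ‖a‖ ≤ 1) (hb : ‖b‖ ≤ 1) :
    ‖b - a‖ ≤ ‖1 - conj a * b‖ := by
  rw [← sq_le_sq₀ (norm_nonneg _) (norm_nonneg _), ← sub_nonneg,
    norm_one_sub_conj_mul_sq_sub_norm_sub_sq]
  exact mul_nonneg (by nlinarith [norm_nonneg a]) (by nlinarith [norm_nonneg b])

noncomputable def diskAutomorphism (a z : ℂ) : ℂ := (z - a) / (1 - conj a * z)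

theorem norm_diskAutomorphism_le_one {a z : ℂ} (ha : ‖a‖ < 1) (hz : ‖z‖ ≤ 1) :
    ‖diskAutomorphism a z‖ ≤ 1 := by
  rw [diskAutomorphism, norm_div]
  exact div_le_one_of_le₀ (norm_sub_le_norm_one_sub_conj_mul ha.le hz) (norm_nonneg _)

theorem differentiableOn_diskAutomorphism {a : ℂ} (ha : ‖a‖ < 1) :
    DifferentiableOn ℂ (diskAutomorphism a) (closedBall 0 1) := fun _ hz =>
  ((differentiableAt_id.sub_const a).div ((differentiableAt_const 1).sub
    (differentiableAt_id.const_mul _)) (norm_pos_iff.mp <| (sub_pos.mpr ha).trans_le <|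
      one_sub_norm_le_norm_one_sub_conj_mul (mem_closedBall_zero_iff.mp hz))).differentiableWithinAt

theorem norm_sub_apply_zero_le_mul {φ : ℂ → ℂ} (hφ : DifferentiableOn ℂ φ (ball 0 1))
    (hmap : MapsTo φ (ball 0 1) (closedBall 0 1)) (h0 : ‖φ 0‖ < 1) {w : ℂ} (hw : ‖w‖ < 1) :
    ‖φ w - φ 0‖ ≤ ‖w‖ * ‖1 - conj (φ 0) * φ w‖ := by
  have hschwarz : ‖diskAutomorphism (φ 0) (φ w)‖ ≤ ‖w‖ :=
    norm_le_norm_of_mapsTo_ball ((differentiableOn_diskAutomorphism h0).comp hφ hmap)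
      (fun _ hz => mem_closedBall_zero_iff.mpr <|
        norm_diskAutomorphism_le_one h0 (mem_closedBall_zero_iff.mp (hmap hz)))
      (by simp [diskAutomorphism]) hw
  have hD : 0 < ‖1 - conj (φ 0) * φ w‖ := (sub_pos.mpr h0).trans_le <|
    one_sub_norm_le_norm_one_sub_conj_mul <|
      mem_closedBall_zero_iff.mp (hmap (mem_ball_zero_iff.mpr hw))
  rwa [diskAutomorphism, norm_div, div_le_iff₀ hD] at hschwarz

theorem one_sub_le_of_norm_sub_le_mul {a b : ℂ} {r : ℝ} (ha : ‖a‖ < 1) (hb : ‖b‖ ≤ 1)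
    (hr₀ : 0 ≤ r) (hr₁ : r ≤ 1) (h : ‖b - a‖ ≤ r * ‖1 - conj a * b‖) :
    1 - r ≤ 2 * (1 + ‖a‖) / (1 - ‖a‖) * (1 - ‖b‖) := by
  set D := ‖1 - conj a * b‖
  have hD : 1 - ‖a‖ ≤ D := one_sub_norm_le_norm_one_sub_conj_mul hb
  have hpick : (1 - r ^ 2) * D ^ 2 ≤ (1 - ‖a‖ ^ 2) * (1 - ‖b‖ ^ 2) := by
    rw [← norm_one_sub_conj_mul_sq_sub_norm_sub_sq]
    nlinarith [pow_le_pow_left₀ (norm_nonneg _) h 2]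
  have hkey : (1 - r) * (1 - ‖a‖) ^ 2 ≤ (1 - ‖a‖) * (2 * (1 + ‖a‖) * (1 - ‖b‖)) :=
    calc (1 - r) * (1 - ‖a‖) ^ 2 ≤ (1 - r ^ 2) * D ^ 2 := by
          have hr : r ^ 2 ≤ r := by nlinarith
          exact mul_le_mul (by linarith) (pow_le_pow_left₀ (sub_pos.mpr ha).le hD 2) (by positivity)
            (by nlinarith)
      _ ≤ (1 - ‖a‖ ^ 2) * (1 - ‖b‖ ^ 2) := hpick
      _ ≤ (1 - ‖a‖) * (2 * (1 + ‖a‖) * (1 - ‖b‖)) := by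
          nlinarith [mul_nonneg (mul_nonneg (sub_pos.mpr ha).le (by positivity : 0 ≤ 1 + ‖a‖))
            (sub_nonneg.mpr hb)]
  rw [div_mul_eq_mul_div, le_div_iff₀ (sub_pos.mpr ha)]
  nlinarith

end Complex

/-- First inequality of the Lemma on holomorphic maps of the disk:
`1 - ‖w‖ ≤ C (1 - ‖φ(w)‖)` with `C = 2 (1 + ‖φ 0‖)/(1 - ‖φ 0‖)`. -/
theorem disk_map_boundary_distance_bound
    (φ : ℂ → ℂ)
    (hφ : DifferentiableOn ℂ φ {w : ℂ | ‖w‖ < 1})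
    (hmap : ∀ w ∈ {w : ℂ | ‖w‖ < 1}, ‖φ w‖ ≤ 1)
    (h0 : ‖φ 0‖ < 1) :
    ∀ w ∈ {w : ℂ | ‖w‖ < 1},
      1 - ‖w‖ ≤ (2 * (1 + ‖φ 0‖) / (1 - ‖φ 0‖)) * (1 - ‖φ w‖) := by
  intro w hw
  have hball : {w : ℂ | ‖w‖ < 1} = ball 0 1 := by ext; simp
  have hmaps : MapsTo φ (ball 0 1) (closedBall 0 1) := fun z hz =>
    mem_closedBall_zero_iff.mpr (hmap z (mem_ball_zero_iff.mp hz))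
  exact one_sub_le_of_norm_sub_le_mul h0 (hmap w hw) (norm_nonneg w) (le_of_lt hw)
    (norm_sub_apply_zero_le_mul (hball ▸ hφ) hmaps h0 hw)
end

section
/- Let U ⊆ ℂ be open and let g : ℂ × ℂ → ℂ be holomorphic (differentiable over ℂ) on U × ℍ, where ℍ = {z : ℂ | 0 < Im z}. Suppose there are constants C > 0 and A, B ≥ 0 such that ‖g(w, x + i·y)‖ ≤ C·(1 + |x|)^B · y^{−A} for all w ∈ U, all x ∈ ℝ and all y ∈ (0,1]. Then for every Schwartz function f : ℝ → ℂ there exists a function h : ℂ → ℂ, holomorphic on U, such that for every w ∈ U the pairing ∫_ℝ g(w, x + i·ε)·f(x) dx tends to h(w) as ε → 0⁺. That is, the distributional boundary value depends holomorphically on the parameter w. -/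
/-!
Put `Φₖ(w, ε) = ∫ g(w, x + iε) f⁽ᵏ⁾(x) dx`. Differentiating under the integral and integrating
by parts in `x` (`g` is holomorphic in `z = x + iε`, so `∂_ε = i ∂_x`) gives `∂_ε Φₖ = -i Φₖ₊₁`,
while the growth bound gives `|Φₖ(w, ε)| ≤ Mₖ ε^(-A)`. Integrating this chain `⌈A⌉` times in `ε`
lowers the exponent by one at each step, until `Φ₁ = O(ε^(-1/2))` is integrable at `0`; hence
`Φ₀(w, ε)` converges as `ε → 0⁺`, at the rate `O(ε^(1/2))` with a constant that does not depend
on `w`. Each `Φ₀(·, ε)` is holomorphic on `U`, and a locally uniform limit of holomorphic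
functions is holomorphic.
-/

open MeasureTheory Filter Set Metric Topology
open Complex (I)
open UpperHalfPlane (isOpen_upperHalfPlaneSet)
open scoped SchwartzMap

local notation "ℍₒ" => UpperHalfPlane.upperHalfPlaneSet

theorem tendsto_const_mul_rpow_nhdsGT_zero (K : ℝ) {p : ℝ} (hp : 0 < p) :
    Tendsto (fun ε : ℝ => K * ε ^ p) (𝓝[>] 0) (𝓝 0) := by
  have h := ((Real.continuousAt_rpow_const 0 p (Or.inr hp.le)).tendsto.const_mul K).mono_left
    (nhdsWithin_le_nhds (s := Ioi 0))
  rwa [Real.zero_rpow hp.ne', mul_zero] at h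

theorem tendstoUniformlyOn_of_norm_sub_le_rpow {α β : Type*} [NormedAddCommGroup β]
    {F : ℝ → α → β} {L : α → β} {S : Set α} {a K p : ℝ} (ha : 0 < a) (hp : 0 < p)
    (hF : ∀ ε ∈ Ioc 0 a, ∀ w ∈ S, ‖F ε w - L w‖ ≤ K * ε ^ p) :
    TendstoUniformlyOn F L (𝓝[>] 0) S := by
  refine Metric.tendstoUniformlyOn_iff.2 fun δ hδ => ?_
  filter_upwards [(tendsto_const_mul_rpow_nhdsGT_zero K hp).eventually (gt_mem_nhds hδ),
    Ioc_mem_nhdsGT ha] with ε hεδ hεa w hw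
  rw [dist_comm, dist_eq_norm]
  exact (hF ε hεa w hw).trans_lt hεδ

section PowerWeight

variable {E : Type*} [NormedAddCommGroup E] [NormedSpace ℝ E]

theorem norm_sub_le_of_norm_deriv_le_rpow {φ ψ : ℝ → E} {a ε M α : ℝ} (hε : 0 < ε)
    (hεa : ε ≤ a) (hα : α ≠ 1) (hφ : ∀ t ∈ Icc ε a, HasDerivAt φ (ψ t) t)
    (hψ : ∀ t ∈ Icc ε a, ‖ψ t‖ ≤ M * t ^ (-α)) :
    ‖φ a - φ ε‖ ≤ M * ((a ^ (1 - α) - ε ^ (1 - α)) / (1 - α)) := by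
  have hγ : 1 - α ≠ 0 := sub_ne_zero.2 (Ne.symm hα)
  have hB : ∀ t ∈ Icc ε a,
      HasDerivAt (fun t => M * ((t ^ (1 - α) - ε ^ (1 - α)) / (1 - α))) (M * t ^ (-α)) t := by
    intro t ht
    have h := (((Real.hasDerivAt_rpow_const (p := 1 - α)
      (Or.inl (hε.trans_le ht.1).ne')).sub_const (ε ^ (1 - α))).div_const (1 - α)).const_mul M
    rwa [sub_sub_cancel_left, mul_div_cancel_left₀ _ hγ] at h
  exact image_norm_le_of_norm_deriv_right_le_deriv_boundary' (f := fun t => φ t - φ ε)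
    (fun t ht => ((hφ t ht).continuousAt.sub continuousAt_const).continuousWithinAt)
    (fun t ht => ((hφ t (Ico_subset_Icc_self ht)).sub_const _).hasDerivWithinAt)
    (by simp) (fun t ht => (hB t ht).continuousAt.continuousWithinAt)
    (fun t ht => (hB t (Ico_subset_Icc_self ht)).hasDerivWithinAt)
    (fun t ht => hψ t (Ico_subset_Icc_self ht)) ⟨hεa, le_rfl⟩

theorem norm_le_of_norm_deriv_le_rpow {φ ψ : ℝ → E} {a ε M α : ℝ} (hε : 0 < ε)
    (hεa : ε ≤ a) (hα : 1 < α) (hφ : ∀ t ∈ Icc ε a, HasDerivAt φ (ψ t) t)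
    (hψ : ∀ t ∈ Icc ε a, ‖ψ t‖ ≤ M * t ^ (-α)) :
    ‖φ ε‖ ≤ ‖φ a‖ + M / (α - 1) * ε ^ (1 - α) := by
  have hM : 0 ≤ M := nonneg_of_mul_nonneg_left ((norm_nonneg _).trans (hψ ε ⟨le_rfl, hεa⟩))
    (Real.rpow_pos_of_pos hε _)
  have hα' : α - 1 ≠ 0 := sub_ne_zero.2 hα.ne'
  have hγ : 1 - α ≠ 0 := sub_ne_zero.2 hα.ne
  calc ‖φ ε‖ ≤ ‖φ a‖ + ‖φ a - φ ε‖ := by simpa using norm_sub_le (φ a) (φ a - φ ε)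
    _ ≤ ‖φ a‖ + M * ((a ^ (1 - α) - ε ^ (1 - α)) / (1 - α)) := by
        gcongr
        exact norm_sub_le_of_norm_deriv_le_rpow hε hεa hα.ne' hφ hψ
    _ = ‖φ a‖ + M / (α - 1) * (ε ^ (1 - α) - a ^ (1 - α)) := by field_simp; ring
    _ ≤ ‖φ a‖ + M / (α - 1) * ε ^ (1 - α) := by
        gcongr ‖φ a‖ + ?_
        exact mul_le_mul_of_nonneg_left (sub_le_self _ (Real.rpow_nonneg (hε.le.trans hεa) _))
          (div_nonneg hM (by linarith))

theorem exists_norm_sub_le_of_norm_deriv_le_rpow [CompleteSpace E] {φ ψ : ℝ → E}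
    {a M α : ℝ} (ha : 0 < a) (hα : α < 1) (hφ : ∀ t ∈ Ioc 0 a, HasDerivAt φ (ψ t) t)
    (hψ : ∀ t ∈ Ioc 0 a, ‖ψ t‖ ≤ M * t ^ (-α)) :
    ∃ L, ∀ ε ∈ Ioc 0 a, ‖φ ε - L‖ ≤ M / (1 - α) * ε ^ (1 - α) := by
  have hM : 0 ≤ M := nonneg_of_mul_nonneg_left ((norm_nonneg _).trans (hψ a ⟨ha, le_rfl⟩))
    (Real.rpow_pos_of_pos ha _)
  have hsub : ∀ s ε, 0 < s → s ≤ ε → ε ≤ a → ‖φ ε - φ s‖ ≤ M / (1 - α) * ε ^ (1 - α) := by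
    intro s ε hs hsε hεa
    refine (norm_sub_le_of_norm_deriv_le_rpow hs hsε hα.ne
      (fun t ht => hφ t ⟨hs.trans_le ht.1, ht.2.trans hεa⟩)
      (fun t ht => hψ t ⟨hs.trans_le ht.1, ht.2.trans hεa⟩)).trans ?_
    rw [mul_div_assoc', div_mul_eq_mul_div]
    gcongr
    exact sub_le_self _ (Real.rpow_nonneg hs.le _)
  have hrate := tendsto_const_mul_rpow_nhdsGT_zero (M / (1 - α)) (sub_pos.2 hα)
  obtain ⟨L, hL⟩ : ∃ L, Tendsto φ (𝓝[>] 0) (𝓝 L) := by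
    refine cauchy_map_iff_exists_tendsto.1 (Metric.cauchy_iff.2 ⟨inferInstance, fun δ hδ => ?_⟩)
    obtain ⟨η, hηδ, hη0, hηa⟩ :=
      ((hrate.eventually (gt_mem_nhds (half_pos hδ))).and (Ioc_mem_nhdsGT ha)).exists
    refine ⟨φ '' Ioc 0 η, image_mem_map (Ioc_mem_nhdsGT hη0), ?_⟩
    rintro _ ⟨s, hs, rfl⟩ _ ⟨s', hs', rfl⟩
    calc dist (φ s) (φ s') ≤ ‖φ η - φ s‖ + ‖φ η - φ s'‖ := by
          rw [dist_eq_norm, ← norm_neg (φ η - φ s), neg_sub]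
          exact norm_sub_le_norm_sub_add_norm_sub _ _ _
      _ < δ / 2 + δ / 2 := add_lt_add ((hsub s η hs.1 hs.2 hηa).trans_lt hηδ)
          ((hsub s' η hs'.1 hs'.2 hηa).trans_lt hηδ)
      _ = δ := add_halves δ
  refine ⟨L, fun ε hε => le_of_tendsto (tendsto_const_nhds.sub hL).norm ?_⟩
  filter_upwards [Ioc_mem_nhdsGT hε.1] with s hs
  exact hsub s ε hs.1 hs.2 hε.2

-- The half-integer exponents keep every integration away from the logarithmic case `α = 1`.
theorem exists_norm_sub_le_of_hasDerivAt_chain (n : ℕ) {a M : ℝ} {φ : ℕ → ℝ → ℂ}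
    (ha : 0 < a) (ha1 : a ≤ 1) (hφ : ∀ k, ∀ t ∈ Ioc 0 a, HasDerivAt (φ k) (-I * φ (k + 1) t) t)
    (hφa : ∀ k ≤ n, ‖φ k a‖ ≤ M)
    (hφn : ∀ t ∈ Ioc 0 a, ‖φ (n + 1) t‖ ≤ M * t ^ (-(n + 1 / 2 : ℝ))) :
    ∃ L, ∀ ε ∈ Ioc 0 a, ‖φ 0 ε - L‖ ≤ 2 * 3 ^ n * M * ε ^ (1 / 2 : ℝ) := by
  have hnorm : ∀ k t, ‖-I * φ (k + 1) t‖ = ‖φ (k + 1) t‖ := by simp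
  induction n generalizing M with
  | zero =>
    obtain ⟨L, hL⟩ := exists_norm_sub_le_of_norm_deriv_le_rpow ha
      (by norm_num : (1 / 2 : ℝ) < 1) (hφ 0) (fun t ht => by simpa [hnorm] using hφn t ht)
    refine ⟨L, fun ε hε => (hL ε hε).trans_eq ?_⟩
    rw [show (1 : ℝ) - 1 / 2 = 1 / 2 by norm_num]
    ring
  | succ n ih =>
    have hn : (0 : ℝ) ≤ n := n.cast_nonneg
    have hM : 0 ≤ M := (norm_nonneg _).trans (hφa 0 (Nat.zero_le _))
    refine (ih (M := 3 * M) (fun k hk => (hφa k (hk.trans n.le_succ)).trans (by linarith))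
      fun t ht => ?_).imp fun L hL ε hε => (hL ε hε).trans_eq (by ring)
    have hstep := norm_le_of_norm_deriv_le_rpow (α := n + 1 + 1 / 2) ht.1 ht.2 (by linarith)
      (fun s hs => hφ (n + 1) s ⟨ht.1.trans_le hs.1, hs.2⟩)
      (fun s hs => by simpa [hnorm] using hφn s ⟨ht.1.trans_le hs.1, hs.2⟩)
    rw [show (1 : ℝ) - (n + 1 + 1 / 2) = -(n + 1 / 2) by ring] at hstep
    have hone : 1 ≤ t ^ (-(n + 1 / 2 : ℝ)) :=
      Real.one_le_rpow_of_pos_of_le_one_of_nonpos ht.1 (ht.2.trans ha1) (by linarith)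
    have hcoef : M / (n + 1 + 1 / 2 - 1) ≤ 2 * M := by
      rw [div_le_iff₀ (by linarith)]
      nlinarith
    calc ‖φ (n + 1) t‖ ≤ M + 2 * M * t ^ (-(n + 1 / 2 : ℝ)) := by
          refine hstep.trans (add_le_add (hφa _ le_rfl) ?_)
          exact mul_le_mul_of_nonneg_right hcoef (Real.rpow_nonneg ht.1.le _)
      _ ≤ 3 * M * t ^ (-(n + 1 / 2 : ℝ)) := by nlinarith

end PowerWeight

theorem SchwartzMap.integrable_one_add_abs_rpow_mul_norm {F : Type*} [NormedAddCommGroup F]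
    [NormedSpace ℝ F] (f : 𝓢(ℝ, F)) (B : ℝ) :
    Integrable fun x : ℝ => (1 + |x|) ^ B * ‖f x‖ := by
  set k := ⌈B⌉₊ + 2
  set S := 2 ^ k * (Finset.Iic (k, 0)).sup (fun m => SchwartzMap.seminorm ℝ m.1 m.2) f
  have hmajor : Integrable fun x : ℝ => S * (1 + ‖x‖) ^ (-2 : ℝ) :=
    (integrable_one_add_norm (by norm_num)).const_mul S
  have hcont : Continuous fun x : ℝ => (1 + |x|) ^ B * ‖f x‖ :=
    ((continuous_const.add continuous_abs).rpow_const
      fun x => Or.inl (by positivity : (0 : ℝ) < 1 + |x|).ne').mul f.continuous.norm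
  refine hmajor.mono' hcont.aestronglyMeasurable (ae_of_all _ fun x => ?_)
  have hx : 1 ≤ 1 + |x| := le_add_of_nonneg_right (abs_nonneg x)
  have hpow : (1 + |x|) ^ B * (1 + |x|) ^ (2 : ℝ) ≤ (1 + |x|) ^ k := by
    rw [← Real.rpow_add (by linarith), ← Real.rpow_natCast]
    exact Real.rpow_le_rpow_of_exponent_le hx
      (by simp only [k]; push_cast; linarith [Nat.le_ceil B])
  have hdecay : (1 + |x|) ^ k * ‖f x‖ ≤ S := by
    simpa using
      SchwartzMap.one_add_le_sup_seminorm_apply (𝕜 := ℝ) (m := (k, 0)) le_rfl le_rfl f x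
  rw [Real.norm_eq_abs, abs_of_nonneg (by positivity), Real.norm_eq_abs,
    Real.rpow_neg (by positivity), ← div_eq_mul_inv, le_div_iff₀ (by positivity)]
  calc (1 + |x|) ^ B * ‖f x‖ * (1 + |x|) ^ (2 : ℝ)
      = (1 + |x|) ^ B * (1 + |x|) ^ (2 : ℝ) * ‖f x‖ := by ring
    _ ≤ (1 + |x|) ^ k * ‖f x‖ := by gcongr
    _ ≤ S := hdecay

section PolynomialWeight

variable {u : ℝ → ℂ} {K B : ℝ}

theorem norm_mul_schwartz_le (f : 𝓢(ℝ, ℂ)) {x : ℝ} (hu : ‖u x‖ ≤ K * (1 + |x|) ^ B) :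
    ‖u x * f x‖ ≤ K * ((1 + |x|) ^ B * ‖f x‖) := by
  rw [norm_mul, ← mul_assoc]
  exact mul_le_mul_of_nonneg_right hu (norm_nonneg _)

theorem integrable_mul_schwartz (hum : AEStronglyMeasurable u)
    (hu : ∀ x, ‖u x‖ ≤ K * (1 + |x|) ^ B) (f : 𝓢(ℝ, ℂ)) :
    Integrable fun x => u x * f x :=
  ((f.integrable_one_add_abs_rpow_mul_norm B).const_mul K).mono'
    (hum.mul f.continuous.aestronglyMeasurable)
    (ae_of_all _ fun _ => norm_mul_schwartz_le f (hu _))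

theorem norm_integral_mul_schwartz_le (hu : ∀ x, ‖u x‖ ≤ K * (1 + |x|) ^ B)
    (f : 𝓢(ℝ, ℂ)) :
    ‖∫ x, u x * f x‖ ≤ K * ∫ x, (1 + |x|) ^ B * ‖f x‖ :=
  (norm_integral_le_of_norm_le ((f.integrable_one_add_abs_rpow_mul_norm B).const_mul K)
    (ae_of_all _ fun _ => norm_mul_schwartz_le f (hu _))).trans_eq (integral_const_mul _ _)

end PolynomialWeight

noncomputable def horizontalPairing (G : ℂ → ℂ) (f : 𝓢(ℝ, ℂ)) (ε : ℝ) : ℂ :=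
  ∫ x : ℝ, G (x + ε * I) * f x

def HasTemperedBound (G : ℂ → ℂ) (h C A B : ℝ) : Prop :=
  ∀ x : ℝ, ∀ y ∈ Ioc 0 h, ‖G (x + y * I)‖ ≤ C * (1 + |x|) ^ B * y ^ (-A)

theorem DifferentiableAt.hasDerivAt_vertical {G : ℂ → ℂ} {x ε : ℝ}
    (hG : DifferentiableAt ℂ G (x + ε * I)) :
    HasDerivAt (fun ε : ℝ => G (x + ε * I)) (deriv G (x + ε * I) * I) ε := by
  have hline : HasDerivAt (fun ε : ℝ => (x : ℂ) + ε * I) I ε := by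
    simpa using ((hasDerivAt_id ε).ofReal_comp.mul_const I).const_add (x : ℂ)
  exact hG.hasDerivAt.comp ε hline

theorem DifferentiableAt.hasDerivAt_horizontal {G : ℂ → ℂ} {x ε : ℝ}
    (hG : DifferentiableAt ℂ G (x + ε * I)) :
    HasDerivAt (fun x : ℝ => G (x + ε * I)) (deriv G (x + ε * I)) x := by
  have hline : HasDerivAt (fun x : ℝ => (x : ℂ) + ε * I) 1 x := by
    simpa using (hasDerivAt_id x).ofReal_comp.add_const (ε * I)
  have h := hG.hasDerivAt.comp x hline
  rwa [mul_one] at h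

theorem DifferentiableOn.differentiableAt_add_mul_I {G : ℂ → ℂ} (hd : DifferentiableOn ℂ G ℍₒ)
    (x : ℝ) {ε : ℝ} (hε : 0 < ε) : DifferentiableAt ℂ G (x + ε * I) :=
  hd.differentiableAt (isOpen_upperHalfPlaneSet.mem_nhds (by simpa using hε))

namespace HasTemperedBound

variable {G : ℂ → ℂ} {h C A B : ℝ}

theorem nonneg (hG : HasTemperedBound G h C A B) (hh : 0 < h) : 0 ≤ C := by
  have h0 := (norm_nonneg _).trans (hG 0 h ⟨hh, le_rfl⟩)
  simp only [abs_zero, add_zero, Real.one_rpow, mul_one] at h0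
  exact nonneg_of_mul_nonneg_left h0 (Real.rpow_pos_of_pos hh _)

theorem integrable (hd : DifferentiableOn ℂ G ℍₒ) (hG : HasTemperedBound G h C A B)
    {ε : ℝ} (hε : ε ∈ Ioc 0 h) (f : 𝓢(ℝ, ℂ)) :
    Integrable fun x : ℝ => G (x + ε * I) * f x :=
  integrable_mul_schwartz (K := C * ε ^ (-A))
    (hd.continuousOn.comp_continuous (by fun_prop)
      fun x => by simpa using hε.1).aestronglyMeasurable
    (fun x => (hG x ε hε).trans_eq (by ring)) f

theorem norm_horizontalPairing_le (hG : HasTemperedBound G h C A B) {ε : ℝ}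
    (hε : ε ∈ Ioc 0 h) (f : 𝓢(ℝ, ℂ)) :
    ‖horizontalPairing G f ε‖ ≤ C * (∫ x, (1 + |x|) ^ B * ‖f x‖) * ε ^ (-A) :=
  (norm_integral_mul_schwartz_le (K := C * ε ^ (-A)) (fun x => (hG x ε hε).trans_eq (by ring))
    f).trans_eq (by ring)

-- For `y ≤ 2 / 3` the disc of radius `y / 2` about `x + iy` stays in the strip `0 < Im ≤ 1`.
theorem norm_le_of_mem_closedBall (hG : HasTemperedBound G 1 C A B) (hA : 0 ≤ A)
    (hB : 0 ≤ B) {x y : ℝ} (hy : y ∈ Ioc 0 (2 / 3)) {ζ : ℂ}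
    (hζ : ζ ∈ closedBall (x + y * I) (y / 2)) :
    ‖G ζ‖ ≤ 2 ^ A * (3 / 2) ^ B * C * (1 + |x|) ^ B * y ^ (-A) := by
  have hC : 0 ≤ C := hG.nonneg one_pos
  rw [mem_closedBall, Complex.dist_eq] at hζ
  have him : |ζ.im - y| ≤ y / 2 := by simpa using (Complex.abs_im_le_norm _).trans hζ
  have hre : |ζ.re - x| ≤ y / 2 := by simpa using (Complex.abs_re_le_norm _).trans hζ
  obtain ⟨him₁, him₂⟩ := abs_le.1 him
  have hlow : y / 2 ≤ ζ.im := by linarith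
  have hpos : 0 < ζ.im := by linarith [hy.1]
  have hbound := hG ζ.re ζ.im ⟨hpos, by linarith [hy.2]⟩
  rw [Complex.re_add_im] at hbound
  have hweight : (1 + |ζ.re|) ^ B ≤ (3 / 2) ^ B * (1 + |x|) ^ B := by
    rw [← Real.mul_rpow (by norm_num) (by positivity)]
    refine Real.rpow_le_rpow (by positivity) ?_ hB
    have := abs_sub_abs_le_abs_sub ζ.re x
    nlinarith [abs_nonneg x, hy.2]
  have hheight : ζ.im ^ (-A) ≤ 2 ^ A * y ^ (-A) := by
    calc ζ.im ^ (-A) ≤ (y / 2) ^ (-A) :=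
          Real.rpow_le_rpow_of_nonpos (by linarith [hy.1]) hlow (by linarith)
      _ = 2 ^ A * y ^ (-A) := by
          rw [Real.div_rpow hy.1.le (by norm_num), Real.rpow_neg (by norm_num : (0 : ℝ) ≤ 2),
            div_inv_eq_mul, mul_comm]
  calc ‖G ζ‖ ≤ C * (1 + |ζ.re|) ^ B * ζ.im ^ (-A) := hbound
    _ ≤ C * ((3 / 2) ^ B * (1 + |x|) ^ B) * (2 ^ A * y ^ (-A)) := by gcongr
    _ = _ := by ring

theorem deriv (hd : DifferentiableOn ℂ G ℍₒ) (hG : HasTemperedBound G 1 C A B)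
    (hA : 0 ≤ A) (hB : 0 ≤ B) :
    HasTemperedBound (deriv G) (2 / 3) (2 ^ (A + 1) * (3 / 2) ^ B * C) (A + 1) B := by
  intro x y hy
  have hball : closedBall (x + y * I) (y / 2) ⊆ ℍₒ := fun ζ hζ => by
    rw [mem_closedBall, Complex.dist_eq] at hζ
    have := (abs_le.1 ((Complex.abs_im_le_norm _).trans hζ)).1
    simp only [Complex.sub_im, Complex.add_im, Complex.ofReal_im, Complex.mul_im,
      Complex.ofReal_re, Complex.I_im, Complex.I_re] at this
    show 0 < ζ.im
    linarith [hy.1]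
  refine (Complex.norm_deriv_le_of_forall_mem_sphere_norm_le (half_pos hy.1)
    (hd.diffContOnCl_ball hball) fun ζ hζ =>
      hG.norm_le_of_mem_closedBall hA hB hy (sphere_subset_closedBall hζ)).trans_eq ?_
  rw [Real.rpow_add_one (by norm_num : (2 : ℝ) ≠ 0), neg_add, Real.rpow_add hy.1,
    Real.rpow_neg_one]
  field_simp

end HasTemperedBound

section HorizontalPairing

variable {G : ℂ → ℂ} {C A B : ℝ}

theorem horizontalPairing_deriv_eq (hd : DifferentiableOn ℂ G ℍₒ)
    (hG : HasTemperedBound G 1 C A B) (hA : 0 ≤ A) (hB : 0 ≤ B) {ε : ℝ}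
    (hε : ε ∈ Ioc 0 (2 / 3)) (f : 𝓢(ℝ, ℂ)) :
    horizontalPairing (deriv G) f ε = -horizontalPairing G (SchwartzMap.derivCLM ℂ ℂ f) ε := by
  have hε₁ : ε ∈ Ioc 0 1 := ⟨hε.1, hε.2.trans (by norm_num)⟩
  have hibp := integral_mul_deriv_eq_deriv_mul_of_integrable
    (u := fun x : ℝ => G (x + ε * I)) (u' := fun x : ℝ => deriv G (x + ε * I))
    (v := f) (v' := SchwartzMap.derivCLM ℂ ℂ f)
    (fun x _ => (hd.differentiableAt_add_mul_I x hε.1).hasDerivAt_horizontal)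
    (fun x _ => f.differentiableAt.hasDerivAt) (hG.integrable hd hε₁ _)
    ((hG.deriv hd hA hB).integrable (hd.deriv isOpen_upperHalfPlaneSet) hε f)
    (hG.integrable hd hε₁ f)
  rw [horizontalPairing, horizontalPairing, hibp, neg_neg]

theorem hasDerivAt_horizontalPairing (hd : DifferentiableOn ℂ G ℍₒ)
    (hG : HasTemperedBound G 1 C A B) (hA : 0 ≤ A) (hB : 0 ≤ B) (f : 𝓢(ℝ, ℂ)) {ε₀ : ℝ}
    (hε₀ : ε₀ ∈ Ioc 0 (1 / 2)) :
    HasDerivAt (horizontalPairing G f)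
      (-I * horizontalPairing G (SchwartzMap.derivCLM ℂ ℂ f) ε₀) ε₀ := by
  set C' := 2 ^ (A + 1) * (3 / 2) ^ B * C
  have hG' := hG.deriv hd hA hB
  have hC' : 0 ≤ C' := hG'.nonneg (by norm_num)
  have hs : Ioo (ε₀ / 2) (2 / 3) ∈ 𝓝 ε₀ :=
    Ioo_mem_nhds (by linarith [hε₀.1]) (by linarith [hε₀.2])
  have hsub : ∀ ε ∈ Ioo (ε₀ / 2) (2 / 3), ε ∈ Ioc 0 (2 / 3) :=
    fun ε hε => ⟨by linarith [hε.1, hε₀.1], hε.2.le⟩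
  have hε₀' : ε₀ ∈ Ioc 0 (2 / 3) := ⟨hε₀.1, by linarith [hε₀.2]⟩
  have hder := hasDerivAt_integral_of_dominated_loc_of_deriv_le (μ := volume)
    (F := fun (ε x : ℝ) => G (x + ε * I) * f x)
    (F' := fun (ε x : ℝ) => I * (deriv G (x + ε * I) * f x))
    (bound := fun x => C' * (ε₀ / 2) ^ (-(A + 1)) * ((1 + |x|) ^ B * ‖f x‖)) hs
    (eventually_of_mem hs fun ε hε => (hG.integrable hd
      ⟨(hsub ε hε).1, (hsub ε hε).2.trans (by norm_num)⟩ f).aestronglyMeasurable)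
    (hG.integrable hd ⟨hε₀.1, hε₀.2.trans (by norm_num)⟩ f)
    ((hG'.integrable (hd.deriv isOpen_upperHalfPlaneSet) hε₀' f).const_mul
      I).aestronglyMeasurable
    (ae_of_all _ fun x ε hε => ?_) ((f.integrable_one_add_abs_rpow_mul_norm B).const_mul _)
    (ae_of_all _ fun x ε hε => ?_)
  · rw [integral_const_mul] at hder
    refine hder.2.congr_deriv ?_
    change I * horizontalPairing (deriv G) f ε₀ = _
    rw [horizontalPairing_deriv_eq hd hG hA hB hε₀' f]
    ring
  · rw [norm_mul, Complex.norm_I, one_mul]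
    have hu : ‖deriv G (x + ε * I)‖ ≤ C' * ε ^ (-(A + 1)) * (1 + |x|) ^ B :=
      (hG' x ε (hsub ε hε)).trans_eq (by ring)
    refine (norm_mul_schwartz_le (u := fun y : ℝ => deriv G (y + ε * I)) f hu).trans ?_
    exact mul_le_mul_of_nonneg_right (mul_le_mul_of_nonneg_left
      (Real.rpow_le_rpow_of_nonpos (half_pos hε₀.1) hε.1.le (by linarith)) hC') (by positivity)
  · exact ((hd.differentiableAt_add_mul_I x (hsub ε hε).1).hasDerivAt_vertical.mul_const
      (f x)).congr_deriv (by ring)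

end HorizontalPairing

theorem exists_norm_horizontalPairing_sub_le {C A B : ℝ} (hA : 0 ≤ A) (hB : 0 ≤ B)
    (f : 𝓢(ℝ, ℂ)) :
    ∃ K, ∀ G : ℂ → ℂ, DifferentiableOn ℂ G ℍₒ → HasTemperedBound G 1 C A B →
      ∃ L, ∀ ε ∈ Ioc 0 (1 / 2), ‖horizontalPairing G f ε - L‖ ≤ K * ε ^ (1 / 2 : ℝ) := by
  set fk : ℕ → 𝓢(ℝ, ℂ) := fun k => (SchwartzMap.derivCLM ℂ ℂ)^[k] f
  set N : ℕ → ℝ := fun k => ∫ x, (1 + |x|) ^ B * ‖fk k x‖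
  set n := ⌈A⌉₊
  set M := 2 ^ A * C * ∑ k ∈ Finset.range (n + 2), N k
  refine ⟨2 * 3 ^ n * M, fun G hd hG => ?_⟩
  have hC : 0 ≤ C := hG.nonneg one_pos
  have hNM : ∀ k ≤ n + 1, 2 ^ A * C * N k ≤ M := fun k hk =>
    mul_le_mul_of_nonneg_left (Finset.single_le_sum
      (fun j _ => integral_nonneg fun x => by positivity) (Finset.mem_range.2 (by omega)))
      (by positivity)
  have hhalf : ((1 : ℝ) / 2) ^ (-A) = 2 ^ A := by
    rw [one_div, Real.inv_rpow (by norm_num), Real.rpow_neg (by norm_num), inv_inv]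
  refine exists_norm_sub_le_of_hasDerivAt_chain n (φ := fun k => horizontalPairing G (fk k))
    (by norm_num) (by norm_num) (fun k t ht => ?_) (fun k hk => ?_) (fun t ht => ?_)
  · simpa only [fk, Function.iterate_succ_apply'] using
      hasDerivAt_horizontalPairing hd hG hA hB (fk k) ht
  · refine (hG.norm_horizontalPairing_le ⟨by norm_num, by norm_num⟩ (fk k)).trans ?_
    rw [hhalf]
    linarith [hNM k (by omega)]
  · have ht1 : t ∈ Ioc 0 1 := ⟨ht.1, ht.2.trans (by norm_num)⟩
    have hexp : t ^ (-A) ≤ t ^ (-(n + 1 / 2 : ℝ)) :=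
      Real.rpow_le_rpow_of_exponent_ge ht.1 ht1.2 (by linarith [Nat.le_ceil A])
    have h2A : (1 : ℝ) ≤ 2 ^ A := Real.one_le_rpow (by norm_num) hA
    calc ‖horizontalPairing G (fk (n + 1)) t‖ ≤ C * N (n + 1) * t ^ (-A) :=
          hG.norm_horizontalPairing_le ht1 _
      _ ≤ 2 ^ A * C * N (n + 1) * t ^ (-A) := by
          gcongr
          · exact Real.rpow_nonneg ht.1.le _
          · exact le_mul_of_one_le_left hC h2A
      _ ≤ M * t ^ (-(n + 1 / 2 : ℝ)) :=
          mul_le_mul (hNM _ le_rfl) hexp (Real.rpow_nonneg ht.1.le _) (by positivity)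

theorem differentiableOn_horizontalPairing_of_param {U : Set ℂ} (hU : IsOpen U)
    {g : ℂ × ℂ → ℂ} (hg : DifferentiableOn ℂ g (U ×ˢ ℍₒ)) {ε K B : ℝ} (hε : 0 < ε)
    (hK : ∀ w ∈ U, ∀ x : ℝ, ‖g (w, x + ε * I)‖ ≤ K * (1 + |x|) ^ B) (f : 𝓢(ℝ, ℂ)) :
    DifferentiableOn ℂ (fun w => horizontalPairing (fun z => g (w, z)) f ε) U := by
  intro w₀ hw₀
  obtain ⟨r, hr, hrU⟩ := nhds_basis_closedBall.mem_iff.1 (hU.mem_nhds hw₀)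
  have hball : ball w₀ (r / 2) ⊆ U :=
    ball_subset_closedBall.trans ((closedBall_subset_closedBall (half_le_self hr.le)).trans hrU)
  have hmem : ∀ w ∈ U, ∀ x : ℝ, (w, (x : ℂ) + ε * I) ∈ U ×ˢ ℍₒ :=
    fun w hw x => ⟨hw, by simpa using hε⟩
  have hpartial : ∀ w ∈ U, ∀ x : ℝ, HasDerivAt (fun ω => g (ω, x + ε * I))
      (fderiv ℂ g (w, x + ε * I) (1, 0)) w := fun w hw x =>
    (hg.differentiableAt ((hU.prod isOpen_upperHalfPlaneSet).mem_nhds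
      (hmem w hw x))).hasFDerivAt.comp_hasDerivAt w
      ((hasDerivAt_id w).prodMk (hasDerivAt_const w _))
  have hcauchy : ∀ w ∈ ball w₀ (r / 2), ∀ x : ℝ,
      ‖fderiv ℂ g (w, x + ε * I) (1, 0)‖ ≤ K / (r / 2) * (1 + |x|) ^ B := by
    intro w hw x
    have hsub : closedBall w (r / 2) ⊆ U :=
      (closedBall_subset_closedBall' (by rw [mem_ball] at hw; linarith)).trans hrU
    rw [← (hpartial w (hball hw) x).deriv, div_mul_eq_mul_div]
    exact Complex.norm_deriv_le_of_forall_mem_sphere_norm_le (half_pos hr)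
      (DifferentiableOn.diffContOnCl_ball
        (fun ω hω => (hpartial ω hω x).differentiableAt.differentiableWithinAt) hsub)
      fun ω hω => hK ω (hsub (sphere_subset_closedBall hω)) x
  have hcont : ∀ w ∈ U, Continuous fun x : ℝ => g (w, x + ε * I) := fun w hw =>
    hg.continuousOn.comp_continuous (by fun_prop) (hmem w hw)
  have hder := hasDerivAt_integral_of_dominated_loc_of_deriv_le (μ := volume)
    (F := fun (w : ℂ) (x : ℝ) => g (w, x + ε * I) * f x)
    (F' := fun (w : ℂ) (x : ℝ) => fderiv ℂ g (w, x + ε * I) (1, 0) * f x)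
    (bound := fun x => K / (r / 2) * ((1 + |x|) ^ B * ‖f x‖)) (ball_mem_nhds w₀ (half_pos hr))
    (eventually_of_mem (hU.mem_nhds hw₀) fun w hw =>
      (hcont w hw).aestronglyMeasurable.mul f.continuous.aestronglyMeasurable)
    (integrable_mul_schwartz (hcont w₀ hw₀).aestronglyMeasurable (hK w₀ hw₀) f)
    (((measurable_fderiv_apply_const ℂ g (1, 0)).comp
      (by fun_prop : Measurable fun x : ℝ => (w₀, (x : ℂ) + ε * I))).aestronglyMeasurable.mul
      f.continuous.aestronglyMeasurable)
    (ae_of_all _ fun x w hw => norm_mul_schwartz_le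
      (u := fun y : ℝ => fderiv ℂ g (w, y + ε * I) (1, 0)) f (hcauchy w hw x))
    ((f.integrable_one_add_abs_rpow_mul_norm B).const_mul _)
    (ae_of_all _ fun x w hw => (hpartial w (hball hw) x).mul_const (f x))
  exact hder.2.differentiableAt.differentiableWithinAt

theorem vladimirov_holomorphic_parameter_general
    (U : Set ℂ) (hU : IsOpen U) (g : ℂ × ℂ → ℂ)
    (hg : DifferentiableOn ℂ g (U ×ˢ {z : ℂ | 0 < z.im}))
    (C A B : ℝ) (hA : 0 ≤ A) (hB : 0 ≤ B)
    (hbound : ∀ w ∈ U, ∀ x : ℝ, ∀ y ∈ Set.Ioc (0:ℝ) 1,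
      ‖g (w, (x : ℂ) + (y : ℂ) * Complex.I)‖ ≤ C * (1 + |x|) ^ B * y ^ (-A)) :
    ∀ f : SchwartzMap ℝ ℂ, ∃ h : ℂ → ℂ, DifferentiableOn ℂ h U ∧
      ∀ w ∈ U,
        Tendsto (fun ε : ℝ => ∫ x : ℝ, g (w, (x : ℂ) + (ε : ℂ) * Complex.I) * f x)
          (nhdsWithin 0 (Set.Ioi 0)) (nhds (h w)) := by
  intro f
  obtain ⟨K, hK⟩ := exists_norm_horizontalPairing_sub_le (C := C) hA hB f
  have hslice : ∀ w ∈ U, DifferentiableOn ℂ (fun z => g (w, z)) ℍₒ := fun w hw =>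
    hg.comp ((differentiableOn_const w).prodMk differentiableOn_id) fun _ hz => ⟨hw, hz⟩
  choose! L hL using fun w hw => hK _ (hslice w hw) (hbound w hw)
  have hunif : TendstoUniformlyOn (fun ε w => horizontalPairing (fun z => g (w, z)) f ε) L
      (𝓝[>] 0) U :=
    tendstoUniformlyOn_of_norm_sub_le_rpow (by norm_num) (by norm_num)
      fun ε hε w hw => hL w hw ε hε
  have hholo : ∀ᶠ ε in 𝓝[>] 0,
      DifferentiableOn ℂ (fun w => horizontalPairing (fun z => g (w, z)) f ε) U := by
    filter_upwards [Ioc_mem_nhdsGT one_pos] with ε hε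
    exact differentiableOn_horizontalPairing_of_param (K := C * ε ^ (-A)) hU hg hε.1
      (fun w hw x => (hbound w hw x ε hε).trans_eq (by ring)) f
  exact ⟨L, hunif.tendstoLocallyUniformlyOn.differentiableOn hholo hU,
    fun w hw => hunif.tendsto_at hw⟩

/-- Parameter-dependent Vladimirov theorem: the distributional boundary value
depends holomorphically on the spectator variable `w`. -/
theorem vladimirov_holomorphic_parameter
    (U : Set ℂ) (hU : IsOpen U) (g : ℂ × ℂ → ℂ)
    (hg : DifferentiableOn ℂ g (U ×ˢ {z : ℂ | 0 < z.im}))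
    (C A B : ℝ) (hC : 0 < C) (hA : 0 ≤ A) (hB : 0 ≤ B)
    (hbound : ∀ w ∈ U, ∀ x : ℝ, ∀ y ∈ Set.Ioc (0:ℝ) 1,
      ‖g (w, (x : ℂ) + (y : ℂ) * Complex.I)‖ ≤ C * (1 + |x|) ^ B * y ^ (-A)) :
    ∀ f : SchwartzMap ℝ ℂ, ∃ h : ℂ → ℂ, DifferentiableOn ℂ h U ∧
      ∀ w ∈ U,
        Tendsto (fun ε : ℝ => ∫ x : ℝ, g (w, (x : ℂ) + (ε : ℂ) * Complex.I) * f x)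
          (nhdsWithin 0 (Set.Ioi 0)) (nhds (h w)) :=
  vladimirov_holomorphic_parameter_general U hU g hg C A B hA hB hbound
end

section
/- Let g : ℂ → ℂ be holomorphic on the open upper half-plane ℍ = {z : ℂ | 0 < Im z} and suppose there are constants C > 0 and A, B ≥ 0 with ‖g(x + i·y)‖ ≤ C·(1 + |x|)^B · y^{−A} for all x ∈ ℝ and y ∈ (0,1]. For a Schwartz function φ : ℝ → ℂ define L(y) = ∫_ℝ g(x + i·y)·φ(x) dx for y ∈ (0,1). Then L is infinitely differentiable on (0,1) and for every k ∈ ℕ and every y ∈ (0,1), the k-th derivative of L at y equals (−i)^k · ∫_ℝ g(x + i·y) · φ^{(k)}(x) dx, where φ^{(k)} is the k-th derivative of φ. -/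
open MeasureTheory Filter
open Metric Complex

lemma aux_int (M D : ℝ) (hM : 0 ≤ M) (hD : 0 ≤ D) (ψ : SchwartzMap ℝ ℂ) :
    Integrable (fun x : ℝ => M * (1 + |x|) ^ D * ‖ψ x‖) := by
  set n := ⌈D⌉₊ with hn
  have hbd : ∀ x : ℝ, M * (1 + |x|) ^ D * ‖ψ x‖ ≤
      M * 2 ^ n * (‖ψ x‖ + |x| ^ n * ‖ψ x‖) := by
    intro x
    have h0 : (0:ℝ) ≤ |x| := abs_nonneg x
    have h1 : (1 + |x|) ^ D ≤ (1 + |x|) ^ (n : ℝ) :=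
      Real.rpow_le_rpow_of_exponent_le (by linarith) (Nat.le_ceil D)
    have h2 : (1 + |x|) ^ (n : ℝ) = (1 + |x|) ^ n := Real.rpow_natCast _ n
    have h3 : (1 + |x|) ^ n ≤ 2 ^ n * (1 + |x| ^ n) := by
      rcases le_total |x| 1 with h | h
      · calc (1 + |x|) ^ n ≤ 2 ^ n := by
              apply pow_le_pow_left₀ (by linarith) (by linarith)
            _ ≤ 2 ^ n * (1 + |x| ^ n) := by
              nlinarith [pow_nonneg h0 n, (pow_pos (by norm_num : (0:ℝ) < 2) n)]
      · calc (1 + |x|) ^ n ≤ (2 * |x|) ^ n := by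
              apply pow_le_pow_left₀ (by linarith) (by linarith)
            _ = 2 ^ n * |x| ^ n := mul_pow 2 |x| n
            _ ≤ 2 ^ n * (1 + |x| ^ n) := by
              nlinarith [pow_nonneg h0 n, (pow_pos (by norm_num : (0:ℝ) < 2) n)]
    have h4 : (1 + |x|) ^ D ≤ 2 ^ n * (1 + |x| ^ n) := by
      rw [← h2] at h3; linarith
    have h5 : M * (1 + |x|) ^ D ≤ M * (2 ^ n * (1 + |x| ^ n)) :=
      mul_le_mul_of_nonneg_left h4 hM
    have h6 := mul_le_mul_of_nonneg_right h5 (norm_nonneg (ψ x))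
    calc M * (1 + |x|) ^ D * ‖ψ x‖ ≤ M * (2 ^ n * (1 + |x| ^ n)) * ‖ψ x‖ := h6
      _ = M * 2 ^ n * (‖ψ x‖ + |x| ^ n * ‖ψ x‖) := by ring
  have hint : Integrable (fun x : ℝ => M * 2 ^ n * (‖ψ x‖ + |x| ^ n * ‖ψ x‖)) := by
    refine Integrable.const_mul ?_ _
    refine ψ.integrable.norm.add ?_
    simpa using ψ.integrable_pow_mul volume n
  refine hint.mono' ?_ ?_
  · apply Continuous.aestronglyMeasurable
    refine ((continuous_const.mul ?_).mul ψ.continuous.norm)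
    exact (continuous_const.add (by continuity : Continuous fun x : ℝ => |x|)).rpow_const (fun x => Or.inr hD)
  · filter_upwards with x
    have hnn : 0 ≤ M * (1 + |x|) ^ D * ‖ψ x‖ := by
      apply mul_nonneg (mul_nonneg hM _) (norm_nonneg _)
      exact Real.rpow_nonneg (by positivity) D
    rw [Real.norm_of_nonneg hnn]
    exact hbd x

lemma aux_prod_int (M D : ℝ) (hM : 0 ≤ M) (hD : 0 ≤ D) (ψ : SchwartzMap ℝ ℂ) (f : ℝ → ℂ)
    (hmeas : AEStronglyMeasurable f volume) (hf : ∀ x, ‖f x‖ ≤ M * (1 + |x|) ^ D) :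
    Integrable (fun x => f x * ψ x) := by
  refine (aux_int M D hM hD ψ).mono' (hmeas.mul ψ.continuous.aestronglyMeasurable) ?_
  filter_upwards with x
  rw [norm_mul]
  exact mul_le_mul_of_nonneg_right (hf x) (norm_nonneg _)

lemma master (g : ℂ → ℂ)
    (hg : DifferentiableOn ℂ g {z : ℂ | 0 < z.im})
    (C A B : ℝ) (hC : 0 < C) (hA : 0 ≤ A) (hB : 0 ≤ B)
    (hbound : ∀ x : ℝ, ∀ y ∈ Set.Ioc (0:ℝ) 1,
      ‖g ((x : ℂ) + (y : ℂ) * Complex.I)‖ ≤ C * (1 + |x|) ^ B * y ^ (-A))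
    (w₀ : ℂ) (h0 : 0 < w₀.re) (h1 : w₀.re < 1) :
    ∃ M r : ℝ, 0 < r ∧ 0 ≤ M ∧
      ∀ x : ℝ, ∀ w ∈ ball w₀ r,
        0 < ((x:ℂ) + w * Complex.I).im ∧
        ‖g ((x:ℂ) + w * Complex.I)‖ ≤ M * (1 + |x|) ^ B ∧
        ‖deriv g ((x:ℂ) + w * Complex.I)‖ ≤ M * (1 + |x|) ^ B := by
  have hU : IsOpen {z : ℂ | 0 < z.im} := isOpen_Ioi.preimage Complex.continuous_im
  set y₀ := w₀.re with hy₀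
  set r : ℝ := min y₀ (1 - y₀) / 4 with hr
  have hrpos : 0 < r := by
    have := lt_min h0 (by linarith : (0:ℝ) < 1 - y₀)
    positivity
  have hr1 : 4 * r ≤ y₀ := by
    have := min_le_left y₀ (1 - y₀); rw [hr]; linarith
  have hr2 : 4 * r ≤ 1 - y₀ := by
    have := min_le_right y₀ (1 - y₀); rw [hr]; linarith
  set c0 : ℝ := 1 + |w₀.im| + 2 * r with hc0
  have hc0_one : 1 ≤ c0 := by
    have := abs_nonneg w₀.im; rw [hc0]; linarith
  set M₀ : ℝ := C * c0 ^ B * (y₀ / 2) ^ (-A) with hM₀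
  have hM₀nn : 0 ≤ M₀ := by
    apply mul_nonneg (mul_nonneg hC.le (Real.rpow_nonneg (by linarith) B))
    exact Real.rpow_nonneg (by linarith) _
  -- pointwise bound near the horizontal line
  have hz : ∀ x : ℝ, ∀ z : ℂ, dist z ((x:ℂ) + w₀ * Complex.I) ≤ 2 * r →
      0 < z.im ∧ ‖g z‖ ≤ M₀ * (1 + |x|) ^ B := by
    intro x z hd
    have him0 : ((x:ℂ) + w₀ * Complex.I).im = y₀ := by simp [hy₀]
    have hre0 : ((x:ℂ) + w₀ * Complex.I).re = x - w₀.im := by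
      simp [sub_eq_add_neg]
    have him : |z.im - y₀| ≤ 2 * r := by
      have := Complex.abs_im_le_norm (z - ((x:ℂ) + w₀ * Complex.I))
      rw [Complex.sub_im, him0] at this
      calc |z.im - y₀| ≤ ‖z - ((x:ℂ) + w₀ * Complex.I)‖ := this
        _ ≤ 2 * r := by rw [← dist_eq]; exact hd
    have hre : |z.re - (x - w₀.im)| ≤ 2 * r := by
      have := Complex.abs_re_le_norm (z - ((x:ℂ) + w₀ * Complex.I))
      rw [Complex.sub_re, hre0] at this
      calc |z.re - (x - w₀.im)| ≤ ‖z - ((x:ℂ) + w₀ * Complex.I)‖ := this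
        _ ≤ 2 * r := by rw [← dist_eq]; exact hd
    have h5 : |z.re| ≤ |x| + |w₀.im| + 2 * r := by
      calc |z.re| = |(z.re - (x - w₀.im)) + (x - w₀.im)| := by ring_nf
        _ ≤ |z.re - (x - w₀.im)| + |x - w₀.im| := abs_add_le _ _
        _ ≤ 2 * r + (|x| + |w₀.im|) := by
            refine add_le_add hre ?_
            rw [sub_eq_add_neg]
            exact (abs_add_le x (-w₀.im)).trans (by rw [abs_neg])
        _ = |x| + |w₀.im| + 2 * r := by ring
    rw [abs_le] at him
    have himpos : 0 < z.im := by linarith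
    have himhalf : y₀ / 2 ≤ z.im := by linarith
    have him1 : z.im ≤ 1 := by linarith
    refine ⟨himpos, ?_⟩
    have hb := hbound z.re z.im ⟨himpos, him1⟩
    rw [Complex.re_add_im] at hb
    have hrebd : 1 + |z.re| ≤ c0 * (1 + |x|) := by
      have := abs_nonneg x
      rw [hc0]; nlinarith
    have hpow1 : (1 + |z.re|) ^ B ≤ (c0 * (1 + |x|)) ^ B :=
      Real.rpow_le_rpow (by positivity) hrebd hB
    have hpow1' : (c0 * (1 + |x|)) ^ B = c0 ^ B * (1 + |x|) ^ B :=
      Real.mul_rpow (by linarith) (by positivity)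
    have hpow2 : z.im ^ (-A) ≤ (y₀ / 2) ^ (-A) :=
      Real.rpow_le_rpow_of_nonpos (by linarith) himhalf (by linarith)
    calc ‖g z‖ ≤ C * (1 + |z.re|) ^ B * z.im ^ (-A) := hb
      _ ≤ C * (c0 ^ B * (1 + |x|) ^ B) * (y₀ / 2) ^ (-A) := by
          refine mul_le_mul ?_ hpow2 (Real.rpow_nonneg himpos.le _)
            (mul_nonneg hC.le (by positivity))
          rw [← hpow1']
          exact mul_le_mul_of_nonneg_left hpow1 hC.le
      _ = M₀ * (1 + |x|) ^ B := by rw [hM₀]; ring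
  refine ⟨M₀ * max 1 (1 / r), r, hrpos, by positivity, ?_⟩
  intro x w hw
  rw [mem_ball] at hw
  have hdist : dist ((x:ℂ) + w * Complex.I) ((x:ℂ) + w₀ * Complex.I) ≤ r := by
    have : (x:ℂ) + w * Complex.I - ((x:ℂ) + w₀ * Complex.I) = (w - w₀) * Complex.I := by ring
    rw [dist_eq, this]
    rw [norm_mul, Complex.norm_I, mul_one]
    exact le_of_lt (by rwa [← Complex.dist_eq])
  have hzc := hz x ((x:ℂ) + w * Complex.I) (by linarith)
  have hMle : M₀ * (1 + |x|) ^ B ≤ M₀ * max 1 (1/r) * (1 + |x|) ^ B := by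
    have h1x : (0:ℝ) ≤ (1 + |x|) ^ B := Real.rpow_nonneg (by positivity) B
    have : M₀ ≤ M₀ * max 1 (1/r) := by
      nlinarith [le_max_left 1 (1/r)]
    nlinarith
  refine ⟨hzc.1, hzc.2.trans hMle, ?_⟩
  -- Cauchy estimate for the derivative
  have hsub : closedBall ((x:ℂ) + w * Complex.I) r ⊆ {z : ℂ | 0 < z.im} := by
    intro z hzb
    rw [mem_closedBall] at hzb
    have : dist z ((x:ℂ) + w₀ * Complex.I) ≤ 2 * r := by
      calc dist z ((x:ℂ) + w₀ * Complex.I)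
          ≤ dist z ((x:ℂ) + w * Complex.I) + dist ((x:ℂ) + w * Complex.I) ((x:ℂ) + w₀ * Complex.I) :=
            dist_triangle _ _ _
        _ ≤ 2 * r := by linarith
    exact (hz x z this).1
  have hdcc : DiffContOnCl ℂ g (ball ((x:ℂ) + w * Complex.I) r) := by
    apply DifferentiableOn.diffContOnCl
    rw [closure_ball _ hrpos.ne']
    exact hg.mono hsub
  have hCau := Complex.norm_deriv_le_of_forall_mem_sphere_norm_le hrpos hdcc
    (C := M₀ * (1 + |x|) ^ B) ?_
  · calc ‖deriv g ((x:ℂ) + w * Complex.I)‖ ≤ M₀ * (1 + |x|) ^ B / r := hCau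
      _ ≤ M₀ * max 1 (1/r) * (1 + |x|) ^ B := by
        rw [div_eq_mul_inv, ← one_div]
        have h1x : (0:ℝ) ≤ (1 + |x|) ^ B := Real.rpow_nonneg (by positivity) B
        have : M₀ * (1/r) ≤ M₀ * max 1 (1/r) :=
          mul_le_mul_of_nonneg_left (le_max_right _ _) hM₀nn
        nlinarith
  · intro z hzs
    rw [mem_sphere] at hzs
    have : dist z ((x:ℂ) + w₀ * Complex.I) ≤ 2 * r := by
      calc dist z ((x:ℂ) + w₀ * Complex.I)
          ≤ dist z ((x:ℂ) + w * Complex.I) + dist ((x:ℂ) + w * Complex.I) ((x:ℂ) + w₀ * Complex.I) :=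
            dist_triangle _ _ _
        _ ≤ 2 * r := by rw [hzs]; linarith
    exact (hz x z this).2

lemma keyC (g : ℂ → ℂ)
    (hg : DifferentiableOn ℂ g {z : ℂ | 0 < z.im})
    (C A B : ℝ) (hC : 0 < C) (hA : 0 ≤ A) (hB : 0 ≤ B)
    (hbound : ∀ x : ℝ, ∀ y ∈ Set.Ioc (0:ℝ) 1,
      ‖g ((x : ℂ) + (y : ℂ) * Complex.I)‖ ≤ C * (1 + |x|) ^ B * y ^ (-A))
    (ψ : SchwartzMap ℝ ℂ) (w₀ : ℂ) (h0 : 0 < w₀.re) (h1 : w₀.re < 1) :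
    HasDerivAt (fun w : ℂ => ∫ x : ℝ, g ((x:ℂ) + w * Complex.I) * ψ x)
      (Complex.I * ∫ x : ℝ, deriv g ((x:ℂ) + w₀ * Complex.I) * ψ x) w₀ := by
  have hU : IsOpen {z : ℂ | 0 < z.im} := isOpen_Ioi.preimage Complex.continuous_im
  obtain ⟨M, r, hr, hM, hMr⟩ := master g hg C A B hC hA hB hbound w₀ h0 h1
  have hgan : AnalyticOnNhd ℂ g {z : ℂ | 0 < z.im} := hg.analyticOnNhd hU
  have hgc : ContinuousOn g {z : ℂ | 0 < z.im} := hg.continuousOn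
  have hg'c : ContinuousOn (deriv g) {z : ℂ | 0 < z.im} := hgan.deriv.continuousOn
  have hcont : ∀ w ∈ ball w₀ r, Continuous fun x : ℝ => g ((x:ℂ) + w * Complex.I) := by
    intro w hw
    apply hgc.comp_continuous (by continuity)
    exact fun x => (hMr x w hw).1
  have hcont' : Continuous fun x : ℝ => deriv g ((x:ℂ) + w₀ * Complex.I) := by
    apply hg'c.comp_continuous (by continuity)
    exact fun x => (hMr x w₀ (mem_ball_self hr)).1
  have key := hasDerivAt_integral_of_dominated_loc_of_deriv_le (μ := volume)
    (F := fun (w : ℂ) (x : ℝ) => g ((x:ℂ) + w * Complex.I) * ψ x)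
    (F' := fun (w : ℂ) (x : ℝ) => deriv g ((x:ℂ) + w * Complex.I) * Complex.I * ψ x)
    (x₀ := w₀) (s := ball w₀ r)
    (bound := fun x : ℝ => M * (1 + |x|) ^ B * ‖ψ x‖) (ball_mem_nhds w₀ hr) ?_ ?_ ?_ ?_ ?_ ?_
  · have h2 : (∫ x : ℝ, deriv g ((x:ℂ) + w₀ * Complex.I) * Complex.I * ψ x)
        = Complex.I * ∫ x : ℝ, deriv g ((x:ℂ) + w₀ * Complex.I) * ψ x := by
      rw [← integral_const_mul]
      congr 1; funext x; ring
    rw [h2] at key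
    exact key.2
  · filter_upwards [ball_mem_nhds w₀ hr] with w hw
    exact ((hcont w hw).mul ψ.continuous).aestronglyMeasurable
  · exact aux_prod_int M B hM hB ψ _ (hcont w₀ (mem_ball_self hr)).aestronglyMeasurable
      (fun x => (hMr x w₀ (mem_ball_self hr)).2.1)
  · exact ((hcont'.mul continuous_const).mul ψ.continuous).aestronglyMeasurable
  · filter_upwards with x
    intro w hw
    rw [norm_mul, norm_mul, Complex.norm_I, mul_one]
    exact mul_le_mul_of_nonneg_right ((hMr x w hw).2.2) (norm_nonneg _)
  · exact aux_int M B hM hB ψ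
  · filter_upwards with x
    intro w hw
    have hdg : DifferentiableAt ℂ g ((x:ℂ) + w * Complex.I) :=
      hg.differentiableAt (hU.mem_nhds ((hMr x w hw).1))
    have hin : HasDerivAt (fun w : ℂ => (x:ℂ) + w * Complex.I) Complex.I w := by
      simpa using ((hasDerivAt_id w).mul_const Complex.I).const_add (x:ℂ)
    exact (hdg.hasDerivAt.comp w hin).mul_const (ψ x)

lemma keyR (g : ℂ → ℂ)
    (hg : DifferentiableOn ℂ g {z : ℂ | 0 < z.im})
    (C A B : ℝ) (hC : 0 < C) (hA : 0 ≤ A) (hB : 0 ≤ B)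
    (hbound : ∀ x : ℝ, ∀ y ∈ Set.Ioc (0:ℝ) 1,
      ‖g ((x : ℂ) + (y : ℂ) * Complex.I)‖ ≤ C * (1 + |x|) ^ B * y ^ (-A))
    (ψ : SchwartzMap ℝ ℂ) (y : ℝ) (hy : y ∈ Set.Ioo (0:ℝ) 1) :
    HasDerivAt (fun y : ℝ => ∫ x : ℝ, g ((x:ℂ) + (y:ℂ) * Complex.I) * ψ x)
      (-Complex.I * ∫ x : ℝ, g ((x:ℂ) + (y:ℂ) * Complex.I) * deriv (⇑ψ) x) y := by
  have hU : IsOpen {z : ℂ | 0 < z.im} := isOpen_Ioi.preimage Complex.continuous_im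
  have h0 : 0 < ((y:ℂ)).re := by simpa using hy.1
  have h1 : ((y:ℂ)).re < 1 := by simpa using hy.2
  obtain ⟨M, r, hr, hM, hMr⟩ := master g hg C A B hC hA hB hbound (y:ℂ) h0 h1
  have hgc : ContinuousOn g {z : ℂ | 0 < z.im} := hg.continuousOn
  have hself := fun x : ℝ => hMr x (y:ℂ) (mem_ball_self hr)
  have hcont : Continuous fun x : ℝ => g ((x:ℂ) + (y:ℂ) * Complex.I) := by
    apply hgc.comp_continuous (by continuity)
    exact fun x => (hself x).1
  have hgan : AnalyticOnNhd ℂ g {z : ℂ | 0 < z.im} := hg.analyticOnNhd hU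
  have hcont' : Continuous fun x : ℝ => deriv g ((x:ℂ) + (y:ℂ) * Complex.I) := by
    apply (hgan.deriv.continuousOn).comp_continuous (by continuity)
    exact fun x => (hself x).1
  -- derivative of the complexified map, restricted to ℝ
  have hR := (keyC g hg C A B hC hA hB hbound ψ (y:ℂ) h0 h1).comp_ofReal
  -- integration by parts
  have hu : ∀ x : ℝ, HasDerivAt (fun x : ℝ => g ((x:ℂ) + (y:ℂ) * Complex.I))
      (deriv g ((x:ℂ) + (y:ℂ) * Complex.I)) x := by
    intro x
    have hdg : DifferentiableAt ℂ g ((x:ℂ) + (y:ℂ) * Complex.I) :=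
      hg.differentiableAt (hU.mem_nhds ((hself x).1))
    have hin : HasDerivAt (fun w : ℂ => w + (y:ℂ) * Complex.I) 1 (x:ℂ) :=
      (hasDerivAt_id _).add_const _
    have h2 := (hdg.hasDerivAt.comp (x:ℂ) hin).comp_ofReal
    simpa using h2
  have hv : ∀ x : ℝ, HasDerivAt (⇑ψ) (deriv (⇑ψ) x) x :=
    fun x => (ψ.differentiableAt).hasDerivAt
  set ψ' : SchwartzMap ℝ ℂ := SchwartzMap.derivCLM ℝ ℂ ψ with hψ'
  have hψ'c : ⇑ψ' = deriv (⇑ψ) := by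
    funext x; exact SchwartzMap.derivCLM_apply ℝ ψ x
  have huv' : Integrable ((fun x : ℝ => g ((x:ℂ) + (y:ℂ) * Complex.I)) * deriv (⇑ψ)) := by
    rw [← hψ'c]
    exact aux_prod_int M B hM hB ψ' _ hcont.aestronglyMeasurable (fun x => (hself x).2.1)
  have hu'v : Integrable ((fun x : ℝ => deriv g ((x:ℂ) + (y:ℂ) * Complex.I)) * ⇑ψ) :=
    aux_prod_int M B hM hB ψ _ hcont'.aestronglyMeasurable (fun x => (hself x).2.2)
  have huv : Integrable ((fun x : ℝ => g ((x:ℂ) + (y:ℂ) * Complex.I)) * ⇑ψ) :=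
    aux_prod_int M B hM hB ψ _ hcont.aestronglyMeasurable (fun x => (hself x).2.1)
  have IBP := MeasureTheory.integral_mul_deriv_eq_deriv_mul_of_integrable (fun x _ => hu x) (fun x _ => hv x) huv' hu'v huv
  have hval : Complex.I * ∫ x : ℝ, deriv g ((x:ℂ) + (y:ℂ) * Complex.I) * ψ x
      = -Complex.I * ∫ x : ℝ, g ((x:ℂ) + (y:ℂ) * Complex.I) * deriv (⇑ψ) x := by
    rw [IBP]; ring
  rw [hval] at hR
  exact hR

/-- Integration-by-parts identity for the pairing of a holomorphic function on
the upper half-plane with a Schwartz test function: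
`∂_y^k L(y) = (−i)^k ∫ g(x+iy) φ^{(k)}(x) dx`. -/
theorem pairing_iterated_deriv_eq
    (g : ℂ → ℂ)
    (hg : DifferentiableOn ℂ g {z : ℂ | 0 < z.im})
    (C A B : ℝ) (hC : 0 < C) (hA : 0 ≤ A) (hB : 0 ≤ B)
    (hbound : ∀ x : ℝ, ∀ y ∈ Set.Ioc (0:ℝ) 1,
      ‖g ((x : ℂ) + (y : ℂ) * Complex.I)‖ ≤ C * (1 + |x|) ^ B * y ^ (-A))
    (φ : SchwartzMap ℝ ℂ) :
    ContDiffOn ℝ (⊤ : ℕ∞) (fun y : ℝ => ∫ x : ℝ, g ((x : ℂ) + (y : ℂ) * Complex.I) * φ x)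
      (Set.Ioo 0 1) ∧
    ∀ k : ℕ, ∀ y ∈ Set.Ioo (0:ℝ) 1,
      iteratedDerivWithin k
          (fun y : ℝ => ∫ x : ℝ, g ((x : ℂ) + (y : ℂ) * Complex.I) * φ x)
          (Set.Ioo 0 1) y =
        (-Complex.I) ^ k *
          ∫ x : ℝ, g ((x : ℂ) + (y : ℂ) * Complex.I) * iteratedDeriv k (fun t => φ t) x := by
  constructor
  · -- smoothness, via analyticity of the complexified map
    have hS : IsOpen {w : ℂ | 0 < w.re ∧ w.re < 1} := by
      have : {w : ℂ | 0 < w.re ∧ w.re < 1} = Complex.re ⁻¹' Set.Ioo 0 1 := rfl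
      rw [this]
      exact isOpen_Ioo.preimage Complex.continuous_re
    have hHdiff : DifferentiableOn ℂ (fun w : ℂ => ∫ x : ℝ, g ((x:ℂ) + w * Complex.I) * φ x)
        {w : ℂ | 0 < w.re ∧ w.re < 1} := fun w hw =>
      ((keyC g hg C A B hC hA hB hbound φ w hw.1 hw.2).differentiableAt).differentiableWithinAt
    have hHan : AnalyticOnNhd ℝ (fun w : ℂ => ∫ x : ℝ, g ((x:ℂ) + w * Complex.I) * φ x)
        {w : ℂ | 0 < w.re ∧ w.re < 1} := (hHdiff.analyticOnNhd hS).restrictScalars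
    have hofReal : AnalyticOnNhd ℝ (fun y : ℝ => (y : ℂ)) (Set.Ioo 0 1) :=
      fun x _ => Complex.ofRealCLM.analyticAt x
    have hcomp : AnalyticOnNhd ℝ
        (fun y : ℝ => ∫ x : ℝ, g ((x:ℂ) + (y:ℂ) * Complex.I) * φ x) (Set.Ioo 0 1) := by
      have := hHan.comp hofReal (fun y hy => by
        simp only [Set.mem_setOf_eq, Complex.ofReal_re]
        exact ⟨hy.1, hy.2⟩)
      exact this
    exact hcomp.contDiffOn (uniqueDiffOn_Ioo 0 1)
  · -- the iterated derivative identity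
    set L : ℝ → ℂ := fun y : ℝ => ∫ x : ℝ, g ((x:ℂ) + (y:ℂ) * Complex.I) * φ x with hL
    set D : ℕ → SchwartzMap ℝ ℂ :=
      fun k => (fun ρ : SchwartzMap ℝ ℂ => SchwartzMap.derivCLM ℝ ℂ ρ)^[k] φ with hD
    have hcoe : ∀ (k : ℕ) (ρ : SchwartzMap ℝ ℂ),
        ⇑((fun ρ : SchwartzMap ℝ ℂ => SchwartzMap.derivCLM ℝ ℂ ρ)^[k] ρ) = iteratedDeriv k ⇑ρ := by
      intro k
      induction k with
      | zero => intro ρ; simp [iteratedDeriv_zero]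
      | succ k ih =>
        intro ρ
        have hco : ⇑(SchwartzMap.derivCLM ℝ ℂ ρ) = deriv ⇑ρ :=
          funext fun x => SchwartzMap.derivCLM_apply ℝ ρ x
        rw [Function.iterate_succ_apply, ih, hco, iteratedDeriv_succ']
    suffices h : ∀ k : ℕ, ∀ y ∈ Set.Ioo (0:ℝ) 1,
        iteratedDerivWithin k L (Set.Ioo 0 1) y
          = (-Complex.I) ^ k * ∫ x : ℝ, g ((x:ℂ) + (y:ℂ) * Complex.I) * (D k) x by
      intro k y hy
      rw [h k y hy, hD]
      simp only [hcoe k φ]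
    intro k
    induction k with
    | zero =>
      intro y hy
      simp [hD, hL]
    | succ k ih =>
      intro y hy
      have hUD : UniqueDiffWithinAt ℝ (Set.Ioo (0:ℝ) 1) y := (uniqueDiffOn_Ioo 0 1) y hy
      rw [iteratedDerivWithin_succ]
      have heq : Set.EqOn (iteratedDerivWithin k L (Set.Ioo 0 1))
          (fun y : ℝ => (-Complex.I) ^ k * ∫ x : ℝ, g ((x:ℂ) + (y:ℂ) * Complex.I) * (D k) x)
          (Set.Ioo 0 1) := fun t ht => ih t ht
      rw [derivWithin_congr heq (heq hy), derivWithin_of_isOpen isOpen_Ioo hy]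
      have hd := (keyR g hg C A B hC hA hB hbound (D k) y hy).const_mul ((-Complex.I) ^ k)
      rw [hd.deriv]
      have hiter : (fun x : ℝ => g ((x:ℂ) + (y:ℂ) * Complex.I) * deriv (⇑(D k)) x)
          = fun x : ℝ => g ((x:ℂ) + (y:ℂ) * Complex.I) * (D (k+1)) x := by
        funext x
        have hstep : D (k+1) = SchwartzMap.derivCLM ℝ ℂ (D k) :=
          Function.iterate_succ_apply' _ k φ
        rw [hstep, SchwartzMap.derivCLM_apply]
      rw [hiter, pow_succ]
      ring
end

section
/- Let A ≥ 0 be real, let k ∈ ℕ with k > A, and let C ≥ 0. Suppose h : ℝ → ℂ is k-times continuously differentiable on the interval (0,1] (in the sense of `ContDiffOn` with derivatives within (0,1]) and that ‖h^{(k)}(ε)‖ ≤ C·ε^{−A} for every ε ∈ (0,1], where h^{(k)} denotes the k-th derivative within (0,1]. Then the limit of h(ε) as ε → 0⁺ (along (0,1]) exists. -/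
/-!
Replace `A` by `B = max A (k - 1/2) ∈ (k - 1, k)`, which still bounds the `k`-th derivative on
`(0,1]`; since `B` is not an integer, integration never meets the logarithmic exponent `1`.
Integrating from `ε` to `1`, a derivative of size `O(ε^{-B})` with `B > 1` yields a function of
size `O(ε^{1-B})`. After `k - 1` steps the first derivative is `O(ε^{-B})` with `B < 1`, hence
integrable on `(0,1]`, and `h ε = h 1 - ∫_ε^1 h'` converges as `ε → 0⁺`. (For `k = 0` the bound
itself forces `h → 0`.)
-/

open Filter Set Asymptotics MeasureTheory intervalIntegral Topology

theorem ContDiffOn.hasDerivWithinAt_iteratedDerivWithin {𝕜 F : Type*}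
    [NontriviallyNormedField 𝕜] [NormedAddCommGroup F] [NormedSpace 𝕜 F] {f : 𝕜 → F}
    {s : Set 𝕜} {x : 𝕜} {n : WithTop ℕ∞} {m : ℕ} (hf : ContDiffOn 𝕜 n f s) (hmn : m < n)
    (hs : UniqueDiffOn 𝕜 s) (hx : x ∈ s) :
    HasDerivWithinAt (iteratedDerivWithin m f s) (iteratedDerivWithin (m + 1) f s x) s x := by
  rw [iteratedDerivWithin_succ]
  exact (hf.differentiableOn_iteratedDerivWithin hmn hs x hx).hasDerivWithinAt

theorem integral_rpow_neg_le {B x : ℝ} (hB : 1 < B) (hx : 0 < x) :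
    ∫ t in x..1, t ^ (-B) ≤ x ^ (1 - B) / (B - 1) := by
  have h0 : (0 : ℝ) ∉ uIcc x 1 := by
    rw [mem_uIcc]
    rintro (h | h) <;> linarith [h.1]
  rw [integral_rpow (Or.inr ⟨by linarith, h0⟩), Real.one_rpow, neg_add_eq_sub,
    ← neg_div_neg_eq, neg_sub, neg_sub]
  gcongr
  linarith

theorem rpow_neg_isBigO_rpow_neg {A B : ℝ} (hAB : A ≤ B) :
    (fun x : ℝ => x ^ (-A)) =O[𝓟 (Ioc 0 1)] fun x => x ^ (-B) := by
  refine IsBigO.of_bound' (eventually_principal.mpr fun x hx => ?_)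
  rw [Real.norm_of_nonneg (Real.rpow_nonneg hx.1.le _),
    Real.norm_of_nonneg (Real.rpow_nonneg hx.1.le _)]
  exact Real.rpow_le_rpow_of_exponent_ge hx.1 hx.2 (neg_le_neg hAB)

section

variable {E : Type*} [NormedAddCommGroup E] [NormedSpace ℝ E] [CompleteSpace E] {g g' : ℝ → E}

theorem integral_eq_sub_of_hasDerivWithinAt_Ioc {a b x : ℝ}
    (hg : ∀ t ∈ Ioc a b, HasDerivWithinAt g (g' t) (Ioc a b) t)
    (hg' : ContinuousOn g' (Ioc a b)) (hx : x ∈ Ioc a b) :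
    ∫ t in x..b, g' t = g b - g x := by
  have hsub : Icc x b ⊆ Ioc a b := Icc_subset_Ioc hx.1 le_rfl
  refine integral_eq_sub_of_hasDerivAt_of_le hx.2
    (fun t ht => (hg t (hsub ht)).continuousWithinAt.mono hsub) (fun t ht => ?_)
    ((hg'.mono hsub).intervalIntegrable_of_Icc hx.2)
  exact (hg t (hsub (Ioo_subset_Icc_self ht))).hasDerivAt (Ioc_mem_nhds (hx.1.trans ht.1) ht.2)

theorem isBigO_rpow_of_isBigO_deriv_rpow {B : ℝ} (hB : 1 < B)
    (hg : ∀ x ∈ Ioc 0 1, HasDerivWithinAt g (g' x) (Ioc 0 1) x)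
    (hg' : ContinuousOn g' (Ioc 0 1)) (hbd : g' =O[𝓟 (Ioc 0 1)] fun x => x ^ (-B)) :
    g =O[𝓟 (Ioc 0 1)] fun x => x ^ (-(B - 1)) := by
  obtain ⟨C, hC0, hC⟩ := hbd.exists_nonneg
  rw [isBigOWith_principal] at hC
  refine isBigO_principal.mpr ⟨‖g 1‖ + C / (B - 1), fun x hx => ?_⟩
  have hpow : 1 ≤ x ^ (1 - B) :=
    Real.one_le_rpow_of_pos_of_le_one_of_nonpos hx.1 hx.2 (by linarith)
  have hint : ‖∫ t in x..1, g' t‖ ≤ C / (B - 1) * x ^ (1 - B) :=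
    calc ‖∫ t in x..1, g' t‖ ≤ ∫ t in x..1, C * t ^ (-B) := by
          refine norm_integral_le_of_norm_le hx.2 (ae_of_all _ fun t ht => ?_) ?_
          · have ht₀ : 0 < t := hx.1.trans ht.1
            simpa [Real.norm_of_nonneg (Real.rpow_nonneg ht₀.le _)] using hC t ⟨ht₀, ht.2⟩
          · refine ContinuousOn.intervalIntegrable_of_Icc hx.2 (continuousOn_const.mul ?_)
            exact fun t ht => (Real.continuousAt_rpow_const t _
              (Or.inl (hx.1.trans_le ht.1).ne')).continuousWithinAt
      _ ≤ C * (x ^ (1 - B) / (B - 1)) := by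
          rw [intervalIntegral.integral_const_mul]
          exact mul_le_mul_of_nonneg_left (integral_rpow_neg_le hB hx.1) hC0
      _ = C / (B - 1) * x ^ (1 - B) := by ring
  calc ‖g x‖ = ‖g 1 - ∫ t in x..1, g' t‖ := by
        rw [integral_eq_sub_of_hasDerivWithinAt_Ioc hg hg' hx, sub_sub_cancel]
    _ ≤ ‖g 1‖ * x ^ (1 - B) + C / (B - 1) * x ^ (1 - B) :=
        (norm_sub_le _ _).trans (add_le_add (le_mul_of_one_le_right (norm_nonneg _) hpow) hint)
    _ = (‖g 1‖ + C / (B - 1)) * ‖x ^ (-(B - 1))‖ := by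
        rw [neg_sub, Real.norm_of_nonneg (Real.rpow_nonneg hx.1.le _), add_mul]

theorem exists_tendsto_of_isBigO_deriv_rpow {B : ℝ} (hB : B < 1)
    (hg : ∀ x ∈ Ioc 0 1, HasDerivWithinAt g (g' x) (Ioc 0 1) x)
    (hg' : ContinuousOn g' (Ioc 0 1)) (hbd : g' =O[𝓟 (Ioc 0 1)] fun x => x ^ (-B)) :
    ∃ L, Tendsto g (𝓝[Ioc 0 1] 0) (𝓝 L) := by
  obtain ⟨C, hC⟩ := isBigO_principal.mp hbd
  have hint : IntegrableOn g' (uIcc 0 1) := by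
    rw [uIcc_of_le zero_le_one, integrableOn_Icc_iff_integrableOn_Ioc]
    exact Integrable.mono' ((intervalIntegrable_rpow' (by linarith)).norm.const_mul C).1
      (hg'.aestronglyMeasurable measurableSet_Ioc)
      ((ae_restrict_mem measurableSet_Ioc).mono fun t ht => hC t ht)
  refine ⟨g 1 - ∫ t in 0..1, g' t, ?_⟩
  have hprim := (continuousOn_primitive_interval_left hint 0 left_mem_uIcc).mono
    (Ioc_subset_Icc_self.trans Icc_subset_uIcc)
  refine (tendsto_const_nhds.sub hprim.tendsto).congr'
    (eventually_nhdsWithin_of_forall fun x hx => ?_)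
  rw [integral_eq_sub_of_hasDerivWithinAt_Ioc hg hg' hx, sub_sub_cancel]

theorem exists_tendsto_of_isBigO_iteratedDerivWithin {h : ℝ → E} :
    ∀ (n : ℕ) {B : ℝ}, (n : ℝ) - 1 < B → B < n → ContDiffOn ℝ n h (Ioc 0 1) →
      iteratedDerivWithin n h (Ioc 0 1) =O[𝓟 (Ioc 0 1)] (fun x => x ^ (-B)) →
      ∃ L, Tendsto h (𝓝[Ioc 0 1] 0) (𝓝 L)
  | 0, B, _, hB, _, hbd => by
    have hB : 0 < -B := by simpa using hB
    refine ⟨0, (hbd.mono (le_principal_iff.mpr self_mem_nhdsWithin)).trans_tendsto ?_⟩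
    simpa [Real.zero_rpow hB.ne'] using
      (Real.continuousAt_rpow_const 0 (-B) (Or.inr hB.le)).tendsto.mono_left nhdsWithin_le_nhds
  | 1, B, _, hB, hh, hbd =>
    exists_tendsto_of_isBigO_deriv_rpow (by simpa using hB)
      (fun x hx => by
        simpa using hh.hasDerivWithinAt_iteratedDerivWithin (m := 0) (by simp)
          (uniqueDiffOn_Ioc 0 1) hx)
      (hh.continuousOn_iteratedDerivWithin le_rfl (uniqueDiffOn_Ioc 0 1)) hbd
  | n + 2, B, hB₀, hB, hh, hbd =>
    exists_tendsto_of_isBigO_iteratedDerivWithin (n + 1) (B := B - 1)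
      (by push_cast at hB₀ ⊢; linarith) (by push_cast at hB ⊢; linarith)
      (hh.of_le (by norm_cast; omega))
      (isBigO_rpow_of_isBigO_deriv_rpow (by push_cast at hB₀; linarith)
        (fun x hx => hh.hasDerivWithinAt_iteratedDerivWithin (by norm_cast; omega)
          (uniqueDiffOn_Ioc 0 1) hx)
        (hh.continuousOn_iteratedDerivWithin le_rfl (uniqueDiffOn_Ioc 0 1)) hbd)

end

theorem limit_exists_of_high_deriv_power_bound_general
    (A : ℝ) (k : ℕ) (hk : A < (k : ℝ)) (C : ℝ)
    (h : ℝ → ℂ)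
    (hsmooth : ContDiffOn ℝ (k : ℕ∞) h (Set.Ioc 0 1))
    (hbound : ∀ ε ∈ Set.Ioc (0:ℝ) 1,
      ‖iteratedDerivWithin k h (Set.Ioc 0 1) ε‖ ≤ C * ε ^ (-A)) :
    ∃ L : ℂ, Tendsto h (nhdsWithin 0 (Set.Ioc 0 1)) (nhds L) := by
  have hbd : iteratedDerivWithin k h (Ioc 0 1) =O[𝓟 (Ioc 0 1)] fun ε => ε ^ (-A) :=
    isBigO_principal.mpr ⟨C, fun ε hε => by
      rw [Real.norm_of_nonneg (Real.rpow_nonneg hε.1.le _)]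
      exact hbound ε hε⟩
  exact exists_tendsto_of_isBigO_iteratedDerivWithin k (B := max A (k - 1 / 2))
    (by linarith [le_max_right A (k - 1 / 2)]) (max_lt hk (by linarith)) hsmooth
    (hbd.trans (rpow_neg_isBigO_rpow_neg (le_max_left _ _)))

/-- Newton–Leibniz step: if the `k`-th derivative of `h` on `(0,1]` is bounded by
`C ε^{-A}` with `k > A`, then `h` has a limit as `ε → 0⁺`. -/
theorem limit_exists_of_high_deriv_power_bound
    (A : ℝ) (hA : 0 ≤ A) (k : ℕ) (hk : A < (k : ℝ)) (C : ℝ) (hC : 0 ≤ C)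
    (h : ℝ → ℂ)
    (hsmooth : ContDiffOn ℝ (k : ℕ∞) h (Set.Ioc 0 1))
    (hbound : ∀ ε ∈ Set.Ioc (0:ℝ) 1,
      ‖iteratedDerivWithin k h (Set.Ioc 0 1) ε‖ ≤ C * ε ^ (-A)) :
    ∃ L : ℂ, Tendsto h (nhdsWithin 0 (Set.Ioc 0 1)) (nhds L) :=
  limit_exists_of_high_deriv_power_bound_general A k hk C h hsmooth hbound
end

section
/- Fix n ∈ ℕ. There exists a constant D > 0 with the following property. Let χ : ℝ → ℂ be smooth, suppose χ^{(k)}(0) = 0 for every k < n, suppose there exist a > 0 and M ≥ 0 with ‖χ(t)‖ ≤ M·e^{−a·t} for all t ≥ 0, and suppose the half-line seminorm S = sup_{t ≥ 0, 0 ≤ m ≤ n+2} (1 + t²)^{(n+2)/2} · ‖χ^{(m)}(t)‖ is finite. Then the Laplace transform 𝓛χ(E) = ∫_{(0,∞)} χ(t)·e^{−E·t} dt is n-times continuously differentiable on [0,∞) (derivatives within [0,∞)) and satisfies sup_{E ≥ 0, 0 ≤ m ≤ n} (1 + E²)^{n/2} · ‖(𝓛χ)^{(m)}(E)‖ ≤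 D · S. -/
open MeasureTheory Set Filter Topology

lemma aux_hasDerivAt_ofReal (t : ℝ) : HasDerivAt (fun s : ℝ => (s:ℂ)) 1 t := by
  simpa using (hasDerivAt_id t).ofReal_comp

lemma aux_hasDerivAt_negpow (j : ℕ) (t : ℝ) :
    HasDerivAt (fun s : ℝ => (-(s:ℂ))^j) ((j:ℂ) * (-(t:ℂ))^(j-1) * (-1)) t := by
  induction j with
  | zero => simpa using hasDerivAt_const t (1:ℂ)
  | succ j ih =>
    have h := ih.mul (aux_hasDerivAt_ofReal t).neg
    have hfun : (fun s : ℝ => (-(s:ℂ))^j * (-(s:ℂ))) = fun s : ℝ => (-(s:ℂ))^(j+1) := by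
      funext s; rw [← pow_succ]
    replace h : HasDerivAt (fun s : ℝ => (-(s:ℂ))^j * (-(s:ℂ)))
        ((j:ℂ) * (-(t:ℂ))^(j-1) * (-1) * (-(t:ℂ)) + (-(t:ℂ))^j * (-1)) t := h
    rw [hfun] at h
    convert h using 1
    cases j with
    | zero => simp
    | succ j =>
      simp only [Nat.add_sub_cancel]
      push_cast
      ring

lemma aux_iteratedDeriv_negpow (m : ℕ) : ∀ (i : ℕ) (t : ℝ),
    iteratedDeriv i (fun s : ℝ => (-(s:ℂ))^m) t
      = (-1)^i * (m.descFactorial i : ℂ) * (-(t:ℂ))^(m - i) := by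
  intro i; induction i with
  | zero => intro t; simp
  | succ i ih =>
    intro t
    rw [iteratedDeriv_succ]
    have hcongr : deriv (iteratedDeriv i fun s : ℝ => (-(s:ℂ))^m) t
        = deriv (fun s : ℝ => (-1)^i * (m.descFactorial i : ℂ) * (-(s:ℂ))^(m-i)) t :=
      Filter.EventuallyEq.deriv_eq (Filter.Eventually.of_forall (fun s => ih s))
    rw [hcongr,
      ((aux_hasDerivAt_negpow (m - i) t).const_mul ((-1:ℂ)^i * (m.descFactorial i : ℂ))).deriv,
      Nat.descFactorial_succ, Nat.sub_sub]
    push_cast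
    ring

lemma aux_contDiffOn_chain (k : ℕ) : ∀ (f : ℕ → ℝ → ℂ) (U : Set ℝ), IsOpen U →
    (∀ m, ∀ x ∈ U, HasDerivAt (f m) (f (m+1) x) x) → ContDiffOn ℝ k (f 0) U := by
  induction k with
  | zero =>
    intro f U hU h
    simp only [Nat.cast_zero, contDiffOn_zero]
    exact fun x hx => ((h 0 x hx).differentiableAt.continuousAt).continuousWithinAt
  | succ k ih =>
    intro f U hU h
    have hcast : ((k+1 : ℕ) : WithTop ℕ∞) = (k : WithTop ℕ∞) + 1 := by push_cast; rfl
    rw [hcast, contDiffOn_succ_iff_derivWithin hU.uniqueDiffOn]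
    refine ⟨fun x hx => (h 0 x hx).differentiableAt.differentiableWithinAt, by simp, ?_⟩
    have heq : ∀ x ∈ U, derivWithin (f 0) U x = f (0+1) x := fun x hx =>
      (h 0 x hx).hasDerivWithinAt.derivWithin (hU.uniqueDiffOn x hx)
    exact (ih (fun m => f (m+1)) U hU (fun m => h (m+1))).congr heq

lemma aux_iteratedDerivWithin_chain : ∀ (m : ℕ) (f : ℕ → ℝ → ℂ),
    (∀ j, ∀ x ∈ Set.Ici (0:ℝ), HasDerivAt (f j) (f (j+1) x) x) →
    ∀ E ∈ Set.Ici (0:ℝ), iteratedDerivWithin m (f 0) (Set.Ici 0) E = f m E := by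
  intro m; induction m with
  | zero => intro f h E hE; simp
  | succ m ih =>
    intro f h E hE
    rw [iteratedDerivWithin_succ']
    have heq : Set.EqOn (derivWithin (f 0) (Set.Ici 0)) (f 1) (Set.Ici 0) := fun x hx =>
      (h 0 x hx).hasDerivWithinAt.derivWithin ((uniqueDiffOn_Ici 0) x hx)
    rw [iteratedDerivWithin_congr heq hE]
    exact ih (fun j => f (j+1)) (fun j => h (j+1)) E hE

lemma aux_integrableOn_pow_mul_exp (m : ℕ) {b : ℝ} (hb : 0 < b) :
    IntegrableOn (fun t : ℝ => t ^ m * Real.exp (-b * t)) (Set.Ioi 0) := by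
  apply integrable_of_isBigO_exp_neg (half_pos hb)
    (Continuous.continuousOn (by continuity))
  have h2 : Tendsto (fun x : ℝ => (b/2) * x) atTop atTop :=
    Tendsto.const_mul_atTop (half_pos hb) tendsto_id
  have h1 : Tendsto (fun x : ℝ => (2/b)^m * (((b/2)*x) ^ m * Real.exp (-((b/2)*x))))
      atTop (𝓝 ((2/b)^m * 0)) :=
    ((Real.tendsto_pow_mul_exp_neg_atTop_nhds_zero m).comp h2).const_mul _
  have hto : Tendsto (fun x : ℝ => x ^ m * Real.exp (-(b/2) * x)) atTop (𝓝 0) := by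
    have : (fun x : ℝ => (2/b)^m * (((b/2)*x) ^ m * Real.exp (-((b/2)*x))))
        = fun x : ℝ => x ^ m * Real.exp (-(b/2) * x) := by
      funext x
      rw [show (2/b)^m * (((b/2)*x)^m * Real.exp (-((b/2)*x)))
          = ((2/b)*(b/2))^m * x^m * Real.exp (-(b/2)*x) from by rw [mul_pow, mul_pow]; ring,
        show (2/b) * (b/2) = 1 from by field_simp, one_pow, one_mul]
    rw [this, mul_zero] at h1
    exact h1
  have hbO : (fun x:ℝ => x^m * Real.exp (-b*x)) =O[atTop] fun x => Real.exp (-(b/2)*x) := by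
    have h3 := (hto.isBigO_one ℝ).mul
      (Asymptotics.isBigO_refl (fun x : ℝ => Real.exp (-(b/2)*x)) atTop)
    refine (h3.congr (fun x => ?_) (fun x => one_mul _))
    rw [mul_assoc, ← Real.exp_add]
    ring_nf
  exact hbO

lemma aux_leibniz (χ : ℝ → ℂ) (hχ : ContDiff ℝ (⊤:ℕ∞) χ) (m k : ℕ) (t : ℝ) :
    ‖iteratedDeriv k (fun s : ℝ => (-(s:ℂ))^m * χ s) t‖ ≤
      ∑ i ∈ Finset.range (k + 1), (k.choose i : ℝ) *
        ‖iteratedDeriv i (fun s : ℝ => (-(s:ℂ))^m) t‖ * ‖iteratedDeriv (k - i) χ t‖ := by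
  have hq : ContDiff ℝ (⊤:ℕ∞) (fun s : ℝ => (-(s:ℂ))^m) := (Complex.ofRealCLM.contDiff.neg).pow m
  have h := norm_iteratedFDeriv_mul_le (𝕜 := ℝ) hq hχ t (n := k) (by exact_mod_cast le_top)
  simpa only [norm_iteratedFDeriv_eq_norm_iteratedDeriv] using h

lemma aux_poly_norm_bound (n m i : ℕ) (hm : m ≤ n) (hi : i ≤ n) {t : ℝ} (ht : 0 ≤ t) :
    ‖iteratedDeriv i (fun s : ℝ => (-(s:ℂ))^m) t‖ ≤
      (((n+1)^n : ℕ) : ℝ) * (1 + t^2) ^ ((n:ℝ)/2) := by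
  have hpos : (0:ℝ) < 1 + t^2 := by positivity
  rw [aux_iteratedDeriv_negpow]
  have h1 : ‖((-1:ℂ))^i * (m.descFactorial i : ℂ) * (-(t:ℂ))^(m - i)‖
      = (m.descFactorial i : ℝ) * t^(m-i) := by
    rw [norm_mul, norm_mul, norm_pow, norm_pow]
    simp [abs_of_nonneg ht]
  rw [h1]
  have hd : ((m.descFactorial i : ℕ) : ℝ) ≤ (((n+1)^n : ℕ) : ℝ) := by
    have : m.descFactorial i ≤ (n+1)^n :=
      (Nat.descFactorial_le_pow m i).trans
        ((Nat.pow_le_pow_left (Nat.le_succ_of_le hm) i).trans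
          (Nat.pow_le_pow_right (Nat.succ_pos n) hi))
    exact_mod_cast this
  have h2 : t^(m-i) ≤ (1 + t^2) ^ ((n:ℝ)/2) := by
    have ht2 : t ≤ Real.sqrt (1+t^2) := by
      rw [show t = Real.sqrt (t^2) from (Real.sqrt_sq ht).symm]
      exact Real.sqrt_le_sqrt (by nlinarith [Real.sq_sqrt (sq_nonneg t)])
    calc t^(m-i) ≤ (Real.sqrt (1+t^2))^(m-i) := pow_le_pow_left₀ ht ht2 _
    _ = (1+t^2) ^ ((((m-i):ℕ):ℝ)/2) := by
        rw [Real.sqrt_eq_rpow, ← Real.rpow_natCast ((1+t^2) ^ ((1:ℝ)/2)) (m-i),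
          ← Real.rpow_mul hpos.le, one_div, inv_mul_eq_div]
    _ ≤ (1+t^2) ^ ((n:ℝ)/2) := by
        apply Real.rpow_le_rpow_of_exponent_le (by nlinarith)
        have : ((m-i:ℕ):ℝ) ≤ (n:ℝ) := by exact_mod_cast (Nat.sub_le m i).trans hm
        linarith
  calc (m.descFactorial i : ℝ) * t^(m-i)
      ≤ (((n+1)^n : ℕ) : ℝ) * ((1 + t^2) ^ ((n:ℝ)/2)) :=
        mul_le_mul hd h2 (pow_nonneg ht _) (by positivity)

lemma aux_deriv_bound (n : ℕ) (χ : ℝ → ℂ) (hχ : ContDiff ℝ (⊤:ℕ∞) χ) (S : ℝ)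
    (hS : ∀ t ≥ (0:ℝ), ∀ m ≤ n + 2, (1+t^2) ^ (((n:ℝ)+2)/2) * ‖iteratedDeriv m χ t‖ ≤ S)
    (m k : ℕ) (hm : m ≤ n) (hk : k ≤ n) {t : ℝ} (ht : 0 ≤ t) :
    ‖iteratedDeriv k (fun s : ℝ => (-(s:ℂ))^m * χ s) t‖ ≤
      (2^n * (n+1)^n : ℕ) * S * (1 + t^2)⁻¹ := by
  have hpos : (0:ℝ) < 1 + t^2 := by positivity
  have hS0 : 0 ≤ S := le_trans (by positivity) (hS t ht 0 (by omega))
  have hχb : ∀ j ≤ n + 2, ‖iteratedDeriv j χ t‖ ≤ S * ((1+t^2) ^ (((n:ℝ)+2)/2))⁻¹ := by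
    intro j hj
    rw [← div_eq_mul_inv, le_div_iff₀ (by positivity), mul_comm]
    exact hS t ht j hj
  have key : ∀ i ∈ Finset.range (k+1), (k.choose i : ℝ) *
      ‖iteratedDeriv i (fun s : ℝ => (-(s:ℂ))^m) t‖ * ‖iteratedDeriv (k - i) χ t‖ ≤
      (k.choose i : ℝ) * (((n+1)^n : ℕ) * S * (1+t^2)⁻¹) := by
    intro i hi
    rw [Finset.mem_range] at hi
    have h1 := aux_poly_norm_bound n m i hm (by omega) ht
    have h2 := hχb (k - i) (by omega)
    calc (k.choose i : ℝ) * ‖iteratedDeriv i (fun s : ℝ => (-(s:ℂ))^m) t‖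
          * ‖iteratedDeriv (k - i) χ t‖
        ≤ (k.choose i : ℝ) * ((((n+1)^n : ℕ) : ℝ) * (1 + t^2) ^ ((n:ℝ)/2))
          * (S * ((1+t^2) ^ (((n:ℝ)+2)/2))⁻¹) := by
          apply mul_le_mul _ h2 (norm_nonneg _) (by positivity)
          exact mul_le_mul_of_nonneg_left h1 (by positivity)
      _ = (k.choose i : ℝ) * (((n+1)^n : ℕ) * S *
            ((1 + t^2) ^ ((n:ℝ)/2) * ((1+t^2) ^ (((n:ℝ)+2)/2))⁻¹)) := by ring
      _ = (k.choose i : ℝ) * (((n+1)^n : ℕ) * S * (1+t^2)⁻¹) := by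
          congr 2
          rw [← Real.rpow_neg hpos.le, ← Real.rpow_add hpos,
            show (n:ℝ)/2 + -(((n:ℝ)+2)/2) = -1 by ring, Real.rpow_neg_one]
  calc ‖iteratedDeriv k (fun s : ℝ => (-(s:ℂ))^m * χ s) t‖
      ≤ ∑ i ∈ Finset.range (k + 1), (k.choose i : ℝ) *
        ‖iteratedDeriv i (fun s : ℝ => (-(s:ℂ))^m) t‖ * ‖iteratedDeriv (k - i) χ t‖ :=
        aux_leibniz χ hχ m k t
    _ ≤ ∑ i ∈ Finset.range (k + 1), (k.choose i : ℝ) * (((n+1)^n : ℕ) * S * (1+t^2)⁻¹) :=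
        Finset.sum_le_sum key
    _ = (2^k : ℕ) * ((((n+1)^n : ℕ) : ℝ) * S * (1+t^2)⁻¹) := by
        rw [← Finset.sum_mul, ← Nat.cast_sum, Nat.sum_range_choose]
    _ ≤ (2^n * (n+1)^n : ℕ) * S * (1 + t^2)⁻¹ := by
        push_cast
        have h2 : (2:ℝ)^k ≤ 2^n := by
          apply pow_le_pow_right₀ (by norm_num) hk
        have h0 : (0:ℝ) ≤ ((n:ℝ)+1)^n * S * (1+t^2)⁻¹ := by positivity
        exact le_of_le_of_eq (mul_le_mul_of_nonneg_right h2 h0) (by ring)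

lemma aux_vanish (n : ℕ) (χ : ℝ → ℂ) (hχ : ContDiff ℝ (⊤:ℕ∞) χ)
    (hvan : ∀ k < n, iteratedDeriv k χ 0 = 0) (m k : ℕ) (hk : k < n) :
    iteratedDeriv k (fun s : ℝ => (-(s:ℂ))^m * χ s) 0 = 0 := by
  rw [← norm_eq_zero]
  refine le_antisymm ?_ (norm_nonneg _)
  refine le_trans (aux_leibniz χ hχ m k 0) (le_of_eq (Finset.sum_eq_zero ?_))
  intro i hi
  rcases eq_or_ne i m with rfl | him
  · have : iteratedDeriv (k - i) χ 0 = 0 := hvan (k - i) (by omega)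
    rw [this, norm_zero, mul_zero]
  · have : iteratedDeriv i (fun s : ℝ => (-(s:ℂ))^m) 0 = 0 := by
      rw [aux_iteratedDeriv_negpow]
      rcases lt_or_gt_of_ne him with h | h
      · rw [show -((0:ℝ):ℂ) = 0 by norm_num, zero_pow (by omega), mul_zero]
      · rw [Nat.descFactorial_eq_zero_iff_lt.mpr h]
        norm_num
    rw [this, norm_zero, mul_zero, zero_mul]

lemma aux_contDiff_iteratedDeriv (k : ℕ) : ∀ (f : ℝ → ℂ), ContDiff ℝ (⊤:ℕ∞) f →
    ContDiff ℝ (⊤:ℕ∞) (iteratedDeriv k f) := by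
  induction k with
  | zero => intro f hf; simpa [iteratedDeriv_zero] using hf
  | succ k ih =>
    intro f hf
    rw [iteratedDeriv_succ']
    exact ih _ (contDiff_infty_iff_deriv.mp hf).2

lemma aux_norm_exp_le_one {E : ℝ} (hE : 0 ≤ E) {t : ℝ} (ht : 0 ≤ t) :
    ‖Complex.exp (-(E:ℂ) * t)‖ ≤ 1 := by
  rw [Complex.norm_exp]
  have : ((-(E:ℂ) * t).re) = -(E*t) := by
    simp [Complex.mul_re]
  rw [this, Real.exp_le_one_iff]
  simp [mul_nonneg hE ht]

lemma aux_integrand_integrable (ψ : ℝ → ℂ) (hψ : Continuous ψ) (c : ℝ)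
    (hb : ∀ t ≥ (0:ℝ), ‖ψ t‖ ≤ c * (1+t^2)⁻¹) {E : ℝ} (hE : 0 ≤ E) :
    IntegrableOn (fun t => ψ t * Complex.exp (-(E:ℂ) * t)) (Set.Ioi 0) := by
  have hcont : Continuous (fun t : ℝ => ψ t * Complex.exp (-(E:ℂ) * t)) :=
    hψ.mul (Complex.continuous_exp.comp (by continuity))
  apply Integrable.mono' ((integrable_inv_one_add_sq.integrableOn).const_mul c)
    hcont.aestronglyMeasurable
  refine (ae_restrict_iff' measurableSet_Ioi).2 (Filter.Eventually.of_forall fun t ht => ?_)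
  rw [norm_mul]
  have h0 : (0:ℝ) ≤ c * (1+t^2)⁻¹ := le_trans (norm_nonneg _) (hb t (le_of_lt ht))
  calc ‖ψ t‖ * ‖Complex.exp (-(E:ℂ) * t)‖
      ≤ (c * (1+t^2)⁻¹) * 1 :=
        mul_le_mul (hb t (le_of_lt ht)) (aux_norm_exp_le_one hE (le_of_lt ht))
          (norm_nonneg _) h0
    _ = c * (1+t^2)⁻¹ := mul_one _

lemma aux_inv_one_add_sq_tendsto : Tendsto (fun t : ℝ => (1+t^2)⁻¹) atTop (𝓝 0) := by
  apply tendsto_inv_atTop_zero.comp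
  exact tendsto_atTop_add_const_left _ 1 (tendsto_pow_atTop two_ne_zero)

lemma aux_ibp (φ : ℝ → ℂ) (hφ : ContDiff ℝ (⊤:ℕ∞) φ) (c : ℝ)
    (h0 : ∀ t ≥ (0:ℝ), ‖φ t‖ ≤ c * (1+t^2)⁻¹)
    (h1 : ∀ t ≥ (0:ℝ), ‖deriv φ t‖ ≤ c * (1+t^2)⁻¹)
    {E : ℝ} (hE : 0 ≤ E) :
    (E:ℂ) * ∫ t in Set.Ioi (0:ℝ), φ t * Complex.exp (-(E:ℂ)*t)
      = φ 0 + ∫ t in Set.Ioi (0:ℝ), deriv φ t * Complex.exp (-(E:ℂ)*t) := by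
  set f : ℝ → ℂ := fun t => φ t * Complex.exp (-(E:ℂ)*t) with hf
  set f' : ℝ → ℂ := fun t =>
    deriv φ t * Complex.exp (-(E:ℂ)*t) + -(E:ℂ) * (φ t * Complex.exp (-(E:ℂ)*t)) with hf'
  have hder : ∀ t : ℝ, HasDerivAt f (f' t) t := by
    intro t
    have hφd : HasDerivAt φ (deriv φ t) t :=
      ((hφ.differentiable (by simp)) t).hasDerivAt
    have hin : HasDerivAt (fun s : ℝ => -(E:ℂ)*(s:ℂ)) (-(E:ℂ)) t := by
      simpa using (aux_hasDerivAt_ofReal t).const_mul (-(E:ℂ))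
    have hexp := hin.cexp
    have := hφd.mul hexp
    refine this.congr_deriv ?_
    show _ = deriv φ t * Complex.exp (-(E:ℂ)*t) + -(E:ℂ) * (φ t * Complex.exp (-(E:ℂ)*t))
    ring
  have hint0 : IntegrableOn (fun t => φ t * Complex.exp (-(E:ℂ)*t)) (Set.Ioi 0) :=
    aux_integrand_integrable φ hφ.continuous c h0 hE
  have hint1 : IntegrableOn (fun t => deriv φ t * Complex.exp (-(E:ℂ)*t)) (Set.Ioi 0) :=
    aux_integrand_integrable _ (hφ.continuous_deriv (by simp)) c h1 hE
  have hint' : IntegrableOn f' (Set.Ioi 0) := hint1.add (hint0.const_mul (-(E:ℂ)))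
  have htend : Tendsto f atTop (𝓝 0) := by
    apply squeeze_zero_norm' (a := fun t => c * (1+t^2)⁻¹)
    · filter_upwards [eventually_ge_atTop (0:ℝ)] with t ht
      rw [hf, norm_mul]
      have hc0 : (0:ℝ) ≤ c * (1+t^2)⁻¹ := le_trans (norm_nonneg _) (h0 t ht)
      calc ‖φ t‖ * ‖Complex.exp (-(E:ℂ) * t)‖
          ≤ (c * (1+t^2)⁻¹) * 1 :=
            mul_le_mul (h0 t ht) (aux_norm_exp_le_one hE ht) (norm_nonneg _) hc0
        _ = c * (1+t^2)⁻¹ := mul_one _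
    · simpa using aux_inv_one_add_sq_tendsto.const_mul c
  have key := integral_Ioi_of_hasDerivAt_of_tendsto (a := (0:ℝ))
    (hder 0).continuousAt.continuousWithinAt (fun x _ => hder x) hint' htend
  have hsplit : ∫ t in Set.Ioi (0:ℝ), f' t
      = (∫ t in Set.Ioi (0:ℝ), deriv φ t * Complex.exp (-(E:ℂ)*t))
        + -(E:ℂ) * ∫ t in Set.Ioi (0:ℝ), φ t * Complex.exp (-(E:ℂ)*t) := by
    rw [hf']
    rw [integral_add hint1 (hint0.const_mul (-(E:ℂ))), integral_const_mul]
  have hf0 : f 0 = φ 0 := by simp [hf]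
  rw [hsplit, hf0] at key
  have : (∫ t in Set.Ioi (0:ℝ), deriv φ t * Complex.exp (-(E:ℂ)*t))
      + -(E:ℂ) * ∫ t in Set.Ioi (0:ℝ), φ t * Complex.exp (-(E:ℂ)*t) = 0 - φ 0 := key
  linear_combination -this

lemma aux_norm_integrand (m : ℕ) (χ : ℝ → ℂ) (E : ℝ) {t : ℝ} (ht : 0 ≤ t) :
    ‖(-(t:ℂ))^m * χ t * Complex.exp (-(E:ℂ) * t)‖
      = t^m * ‖χ t‖ * Real.exp (-(E*t)) := by
  have h1 : ‖Complex.exp (-(E:ℂ) * t)‖ = Real.exp (-(E*t)) := by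
    rw [show (-(E:ℂ) * t) = ((-(E*t) : ℝ) : ℂ) from by push_cast; ring,
      Complex.norm_exp, Complex.ofReal_re]
  have h2 : ‖(-(t:ℂ))^m‖ = t^m := by
    rw [norm_pow, norm_neg, Complex.norm_real, Real.norm_eq_abs, abs_of_nonneg ht]
  rw [norm_mul, norm_mul, h1, h2]

lemma aux_hasDerivAt_F (χ : ℝ → ℂ) (hχc : Continuous χ) {a M : ℝ} (ha : 0 < a)
    (hexp : ∀ t ≥ (0:ℝ), ‖χ t‖ ≤ M * Real.exp (-(a*t))) (m : ℕ) {E₀ : ℝ}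
    (hE₀ : -(a/4) < E₀) :
    HasDerivAt (fun E : ℝ => ∫ t in Set.Ioi (0:ℝ), (-(t:ℂ))^m * χ t * Complex.exp (-(E:ℂ)*t))
      (∫ t in Set.Ioi (0:ℝ), (-(t:ℂ))^(m+1) * χ t * Complex.exp (-(E₀:ℂ)*t)) E₀ := by
  have hM : 0 ≤ M := le_trans (norm_nonneg (χ 0)) (by simpa using hexp 0 le_rfl)
  have hmeas : ∀ (E : ℝ) (j : ℕ), AEStronglyMeasurable
      (fun t : ℝ => (-(t:ℂ))^j * χ t * Complex.exp (-(E:ℂ)*t))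
      (volume.restrict (Set.Ioi 0)) := by
    intro E j
    exact (((Complex.continuous_ofReal.neg.pow j).mul hχc).mul
      (Complex.continuous_exp.comp (by continuity))).aestronglyMeasurable
  have hball : ∀ (j : ℕ) {t : ℝ}, 0 < t → ∀ E ∈ Metric.ball E₀ (a/4),
      ‖(-(t:ℂ))^j * χ t * Complex.exp (-(E:ℂ)*t)‖ ≤ M * (t^j * Real.exp (-(a/2) * t)) := by
    intro j t ht E hEball
    rw [aux_norm_integrand j χ E ht.le]
    have hEt : Real.exp (-(E*t)) ≤ Real.exp ((a/2)*t) := by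
      apply Real.exp_le_exp.2
      have : |E - E₀| < a/4 := by simpa [Real.dist_eq] using hEball
      nlinarith [abs_lt.1 this]
    have hχt := hexp t ht.le
    calc t^j * ‖χ t‖ * Real.exp (-(E*t))
        ≤ t^j * (M * Real.exp (-(a*t))) * Real.exp ((a/2)*t) := by
          apply mul_le_mul (mul_le_mul_of_nonneg_left hχt (pow_nonneg ht.le j)) hEt
            (Real.exp_nonneg _)
          positivity
      _ = M * (t^j * Real.exp (-(a/2) * t)) := by
          have hee : Real.exp (-(a*t)) * Real.exp ((a/2)*t) = Real.exp (-(a/2)*t) := by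
            rw [← Real.exp_add]; ring_nf
          rw [← hee]; ring
  have hbd_int : Integrable (fun t => M * (t^(m+1) * Real.exp (-(a/2) * t)))
      (volume.restrict (Set.Ioi 0)) :=
    (aux_integrableOn_pow_mul_exp (m+1) (b := a/2) (by linarith)).const_mul M
  have hF_int : Integrable (fun t : ℝ => (-(t:ℂ))^m * χ t * Complex.exp (-(E₀:ℂ)*t))
      (volume.restrict (Set.Ioi 0)) := by
    apply Integrable.mono' ((aux_integrableOn_pow_mul_exp m (b := a/2) (by linarith)).const_mul M)
      (hmeas E₀ m)
    refine (ae_restrict_iff' measurableSet_Ioi).2 (Filter.Eventually.of_forall fun t ht => ?_)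
    exact hball m ht E₀ (Metric.mem_ball_self (by linarith))
  have h := hasDerivAt_integral_of_dominated_loc_of_deriv_le (s := Metric.ball E₀ (a/4))
    (x₀ := E₀) (bound := fun t => M * (t^(m+1) * Real.exp (-(a/2) * t)))
    (F' := fun E t => (-(t:ℂ))^(m+1) * χ t * Complex.exp (-(E:ℂ)*t))
    (Metric.ball_mem_nhds _ (by linarith))
    (Filter.Eventually.of_forall (fun E => hmeas E m)) hF_int (hmeas E₀ (m+1))
    ((ae_restrict_iff' measurableSet_Ioi).2 (Filter.Eventually.of_forall
      (fun t ht E hE => hball (m+1) ht E hE)))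
    hbd_int
    ((ae_restrict_iff' measurableSet_Ioi).2 (Filter.Eventually.of_forall
      (fun t _ E _ => ?_)))
  · exact h.2
  · have hin : HasDerivAt (fun E : ℝ => -(E:ℂ)*(t:ℂ)) (-(t:ℂ)) E := by
      have := (aux_hasDerivAt_ofReal E).mul_const (-(t:ℂ))
      simpa using this
    have hexp' := hin.cexp
    have := hexp'.const_mul ((-(t:ℂ))^m * χ t)
    refine this.congr_deriv ?_
    show _ = (-(t:ℂ))^(m+1) * χ t * Complex.exp (-(E:ℂ)*t)
    rw [pow_succ]
    ring

/-- Continuity of the Laplace transform from functions vanishing to order `n` at `0`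
(with half-line seminorm of order `n+2`) to the half-line Schwartz seminorm of
order `n`, with constant `D` independent of `χ`. -/
theorem laplace_transform_halfline_seminorm_bound (n : ℕ) :
    ∃ D : ℝ, 0 < D ∧
      ∀ χ : ℝ → ℂ, ContDiff ℝ (⊤ : ℕ∞) χ →
        (∀ k < n, iteratedDeriv k χ 0 = 0) →
        (∃ a > (0:ℝ), ∃ M ≥ (0:ℝ), ∀ t ≥ (0:ℝ), ‖χ t‖ ≤ M * Real.exp (-(a * t))) →
        ∀ S : ℝ,
          (∀ t ≥ (0:ℝ), ∀ m ≤ n + 2,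
            (1 + t ^ 2) ^ (((n : ℝ) + 2) / 2) * ‖iteratedDeriv m χ t‖ ≤ S) →
          ContDiffOn ℝ (n : ℕ∞)
            (fun E : ℝ => ∫ t in Set.Ioi (0:ℝ), χ t * Complex.exp (-(E : ℂ) * (t : ℂ)))
            (Set.Ici 0) ∧
          ∀ E ≥ (0:ℝ), ∀ m ≤ n,
            (1 + E ^ 2) ^ ((n : ℝ) / 2) *
              ‖iteratedDerivWithin m
                (fun E : ℝ => ∫ t in Set.Ioi (0:ℝ), χ t * Complex.exp (-(E : ℂ) * (t : ℂ)))
                (Set.Ici 0) E‖ ≤ D * S := by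
  refine ⟨(2:ℝ)^n * ((((2^n * (n+1)^n : ℕ)) : ℝ) * (Real.pi/2)) + 1, by positivity, ?_⟩
  rintro χ hχω hvan ⟨a, ha, M, hM, hexp⟩ S hS
  have hχ : ContDiff ℝ (⊤:ℕ∞) χ := hχω.of_le (by simp)
  have hS0 : 0 ≤ S := le_trans (by positivity) (hS 0 le_rfl 0 (by omega))
  have hder : ∀ m : ℕ, ∀ E ∈ Set.Ioi (-(a/4)),
      HasDerivAt (fun E : ℝ => ∫ t in Set.Ioi (0:ℝ),
          (-(t:ℂ))^m * χ t * Complex.exp (-(E:ℂ)*t))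
        (∫ t in Set.Ioi (0:ℝ), (-(t:ℂ))^(m+1) * χ t * Complex.exp (-(E:ℂ)*t)) E :=
    fun m E hE => aux_hasDerivAt_F χ hχ.continuous ha hexp m hE
  have hsub : Set.Ici (0:ℝ) ⊆ Set.Ioi (-(a/4)) := fun x hx =>
    lt_of_lt_of_le (show -(a/4) < (0:ℝ) by simp only [mem_Ici] at hx; linarith) hx
  have hfun : (fun E : ℝ => ∫ t in Set.Ioi (0:ℝ), χ t * Complex.exp (-(E : ℂ) * (t : ℂ)))
      = (fun E : ℝ => ∫ t in Set.Ioi (0:ℝ), (-(t:ℂ))^0 * χ t * Complex.exp (-(E:ℂ)*t)) := by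
    funext E
    simp only [pow_zero, one_mul]
  constructor
  · rw [hfun]
    refine ContDiffOn.mono ?_ hsub
    have := aux_contDiffOn_chain n
      (fun m E => ∫ t in Set.Ioi (0:ℝ), (-(t:ℂ))^m * χ t * Complex.exp (-(E:ℂ)*t))
      (Set.Ioi (-(a/4))) isOpen_Ioi hder
    exact_mod_cast this
  · intro E hE m hm
    rw [hfun, aux_iteratedDerivWithin_chain m
      (fun m E => ∫ t in Set.Ioi (0:ℝ), (-(t:ℂ))^m * χ t * Complex.exp (-(E:ℂ)*t))
      (fun j x hx => hder j x (hsub hx)) E hE]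
    have hE' : (0:ℝ) ≤ E := hE
    -- derivative bounds for the integrand
    have hgb : ∀ k ≤ n, ∀ t ≥ (0:ℝ),
        ‖iteratedDeriv k (fun s : ℝ => (-(s:ℂ))^m * χ s) t‖ ≤
          (((2^n * (n+1)^n : ℕ)) : ℝ) * S * (1+t^2)⁻¹ :=
      fun k hk t ht => aux_deriv_bound n χ hχ S hS m k hm hk ht
    have hsm : ContDiff ℝ (⊤:ℕ∞) (fun s : ℝ => (-(s:ℂ))^m * χ s) :=
      ((Complex.ofRealCLM.contDiff.neg).pow m).mul hχ
    have claim : ∀ k, k ≤ n → (E:ℂ)^k *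
        (∫ t in Set.Ioi (0:ℝ), (-(t:ℂ))^m * χ t * Complex.exp (-(E:ℂ)*t))
        = ∫ t in Set.Ioi (0:ℝ),
            iteratedDeriv k (fun s : ℝ => (-(s:ℂ))^m * χ s) t * Complex.exp (-(E:ℂ)*t) := by
      intro k
      induction k with
      | zero => intro _; simp only [pow_zero, one_mul, iteratedDeriv_zero]
      | succ k ih =>
        intro hk1
        have hk' : k ≤ n := by omega
        have hkn : k < n := by omega
        have hφ := aux_contDiff_iteratedDeriv k (fun s : ℝ => (-(s:ℂ))^m * χ s) hsm
        have hibp := aux_ibp (iteratedDeriv k (fun s : ℝ => (-(s:ℂ))^m * χ s)) hφ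
          ((((2^n * (n+1)^n : ℕ)) : ℝ) * S)
          (fun t ht => hgb k hk' t ht)
          (fun t ht => by
            rw [← iteratedDeriv_succ]
            exact hgb (k+1) hk1 t ht)
          hE'
        have hv0 : iteratedDeriv k (fun s : ℝ => (-(s:ℂ))^m * χ s) 0 = 0 :=
          aux_vanish n χ hχ hvan m k hkn
        rw [hv0, zero_add] at hibp
        calc (E:ℂ)^(k+1) * (∫ t in Set.Ioi (0:ℝ), (-(t:ℂ))^m * χ t * Complex.exp (-(E:ℂ)*t))
            = (E:ℂ) * ((E:ℂ)^k *
              (∫ t in Set.Ioi (0:ℝ), (-(t:ℂ))^m * χ t * Complex.exp (-(E:ℂ)*t))) := by ring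
          _ = (E:ℂ) * ∫ t in Set.Ioi (0:ℝ),
                iteratedDeriv k (fun s : ℝ => (-(s:ℂ))^m * χ s) t * Complex.exp (-(E:ℂ)*t) := by
              rw [ih hk']
          _ = ∫ t in Set.Ioi (0:ℝ),
                deriv (iteratedDeriv k (fun s : ℝ => (-(s:ℂ))^m * χ s)) t
                  * Complex.exp (-(E:ℂ)*t) := hibp
          _ = ∫ t in Set.Ioi (0:ℝ),
                iteratedDeriv (k+1) (fun s : ℝ => (-(s:ℂ))^m * χ s) t
                  * Complex.exp (-(E:ℂ)*t) := by
              simp_rw [← iteratedDeriv_succ]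
    have hmom : ∀ k, k ≤ n → E^k *
        ‖∫ t in Set.Ioi (0:ℝ), (-(t:ℂ))^m * χ t * Complex.exp (-(E:ℂ)*t)‖ ≤
        (((2^n * (n+1)^n : ℕ)) : ℝ) * S * (Real.pi/2) := by
      intro k hk
      have h1 : E^k * ‖∫ t in Set.Ioi (0:ℝ), (-(t:ℂ))^m * χ t * Complex.exp (-(E:ℂ)*t)‖
          = ‖(E:ℂ)^k * ∫ t in Set.Ioi (0:ℝ), (-(t:ℂ))^m * χ t * Complex.exp (-(E:ℂ)*t)‖ := by
        rw [norm_mul, norm_pow, Complex.norm_real, Real.norm_eq_abs, abs_of_nonneg hE']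
      rw [h1, claim k hk]
      have hInt : Integrable (fun t : ℝ => (((2^n * (n+1)^n : ℕ)) : ℝ) * S * (1+t^2)⁻¹)
          (volume.restrict (Set.Ioi 0)) :=
        (integrable_inv_one_add_sq.integrableOn).const_mul _
      refine le_trans (norm_integral_le_of_norm_le hInt
        ((ae_restrict_iff' measurableSet_Ioi).2 (Filter.Eventually.of_forall fun t ht => ?_))) ?_
      · rw [norm_mul]
        have hb := hgb k hk t (le_of_lt ht)
        have h0 : (0:ℝ) ≤ (((2^n * (n+1)^n : ℕ)) : ℝ) * S * (1+t^2)⁻¹ :=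
          le_trans (norm_nonneg _) hb
        calc ‖iteratedDeriv k (fun s : ℝ => (-(s:ℂ))^m * χ s) t‖
              * ‖Complex.exp (-(E:ℂ)*t)‖
            ≤ ((((2^n * (n+1)^n : ℕ)) : ℝ) * S * (1+t^2)⁻¹) * 1 :=
              mul_le_mul hb (aux_norm_exp_le_one hE' (le_of_lt ht)) (norm_nonneg _) h0
          _ = (((2^n * (n+1)^n : ℕ)) : ℝ) * S * (1+t^2)⁻¹ := mul_one _
      · rw [integral_const_mul, integral_Ioi_inv_one_add_sq]
        simp [Real.arctan_zero]
    have hpow : (1+E^2) ^ ((n:ℝ)/2) ≤ (1+E)^n := by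
      have h1 : (1+E^2) ≤ (1+E)^2 := by nlinarith
      calc (1+E^2) ^ ((n:ℝ)/2) ≤ ((1+E)^2) ^ ((n:ℝ)/2) :=
            Real.rpow_le_rpow (by positivity) h1 (by positivity)
        _ = (1+E)^n := by
            rw [← Real.rpow_natCast (1+E) 2, ← Real.rpow_mul (by positivity),
              show ((2:ℕ):ℝ)*((n:ℝ)/2) = ((n:ℕ):ℝ) by push_cast; ring, Real.rpow_natCast]
    calc (1 + E ^ 2) ^ ((n : ℝ) / 2) *
        ‖∫ t in Set.Ioi (0:ℝ), (-(t:ℂ))^m * χ t * Complex.exp (-(E:ℂ)*t)‖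
        ≤ (1+E)^n * ‖∫ t in Set.Ioi (0:ℝ), (-(t:ℂ))^m * χ t * Complex.exp (-(E:ℂ)*t)‖ :=
          mul_le_mul_of_nonneg_right hpow (norm_nonneg _)
      _ = ∑ k ∈ Finset.range (n+1), (n.choose k : ℝ) * (E^k *
          ‖∫ t in Set.Ioi (0:ℝ), (-(t:ℂ))^m * χ t * Complex.exp (-(E:ℂ)*t)‖) := by
          rw [show (1:ℝ)+E = E+1 by ring, add_pow, Finset.sum_mul]
          refine Finset.sum_congr rfl (fun k hk => ?_)
          rw [one_pow]
          ring
      _ ≤ ∑ k ∈ Finset.range (n+1), (n.choose k : ℝ) *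
            ((((2^n * (n+1)^n : ℕ)) : ℝ) * S * (Real.pi/2)) := by
          refine Finset.sum_le_sum (fun k hk => ?_)
          refine mul_le_mul_of_nonneg_left (hmom k ?_) (by positivity)
          rw [Finset.mem_range] at hk; omega
      _ = ((2^n : ℕ) : ℝ) * ((((2^n * (n+1)^n : ℕ)) : ℝ) * S * (Real.pi/2)) := by
          rw [← Finset.sum_mul, ← Nat.cast_sum, Nat.sum_range_choose]
      _ ≤ ((2:ℝ)^n * ((((2^n * (n+1)^n : ℕ)) : ℝ) * (Real.pi/2)) + 1) * S := by
          push_cast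
          nlinarith [hS0, Real.pi_pos, sq_nonneg ((2:ℝ)^n), pow_nonneg (by norm_num : (0:ℝ) ≤ 2) n,
            pow_nonneg (by positivity : (0:ℝ) ≤ (n:ℝ)+1) n, Real.pi_pos.le,
            mul_nonneg (mul_nonneg (pow_nonneg (by norm_num : (0:ℝ) ≤ 2) n)
              (pow_nonneg (by positivity : (0:ℝ) ≤ (n:ℝ)+1) n)) Real.pi_pos.le]
end

section
/- Let m ≥ 2 and model (1+m)-dimensional Minkowski space as ℝ × EuclideanSpace ℝ (Fin m). The set of points spacelike separated from the origin, {p : ℝ × EuclideanSpace ℝ (Fin m) | |p.1| < ‖p.2‖}, is path-connected. -/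
/-- Path shrinking the time coordinate of `p` to `0`, keeping the space part. -/
noncomputable def timePath {m : ℕ} (p : ℝ × EuclideanSpace ℝ (Fin m)) :
    Path p ((0 : ℝ), p.2) where
  toFun t := ((1 - (t : ℝ)) * p.1, p.2)
  continuous_toFun := by continuity
  source' := by simp
  target' := by simp

/-- For spatial dimension `m ≥ 2`, the set of points spacelike separated from the
origin in `(1+m)`-dimensional Minkowski space is path-connected. -/
theorem spacelike_complement_isPathConnected
    (m : ℕ) (hm : 2 ≤ m) :
    IsPathConnected {p : ℝ × EuclideanSpace ℝ (Fin m) | |p.1| < ‖p.2‖} := by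
  set S : Set (ℝ × EuclideanSpace ℝ (Fin m)) := {p | |p.1| < ‖p.2‖}
  -- the complement of the origin in space is path connected
  have hrank : 1 < Module.rank ℝ (EuclideanSpace ℝ (Fin m)) := by
    rw [← Module.finrank_eq_rank, finrank_euclideanSpace_fin]
    exact_mod_cast lt_of_lt_of_le one_lt_two hm
  have hcompl : IsPathConnected ({(0 : EuclideanSpace ℝ (Fin m))}ᶜ) :=
    isPathConnected_compl_singleton_of_one_lt_rank hrank 0
  -- base point
  set x₀ : EuclideanSpace ℝ (Fin m) := EuclideanSpace.single ⟨0, by omega⟩ 1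
  have hx₀ : x₀ ≠ 0 := by
    have : ‖x₀‖ = 1 := by simp [x₀, EuclideanSpace.norm_single]
    intro h
    rw [h] at this
    simp at this
  refine ⟨((0 : ℝ), x₀), ?_, ?_⟩
  · show |(0 : ℝ)| < ‖x₀‖
    simp [norm_pos_iff, hx₀]
  · rintro ⟨t, x⟩ hp
    have hp' : |t| < ‖x‖ := hp
    have hx : x ≠ 0 := by
      intro h; rw [h] at hp'; simp at hp'
      exact absurd hp' (not_lt.mpr (abs_nonneg t)).elim
    -- step 1: shrink time to 0
    have h1 : JoinedIn S (t, x) ((0 : ℝ), x) := by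
      refine ⟨timePath (t, x), fun s => ?_⟩
      show |(1 - (s : ℝ)) * t| < ‖x‖
      calc |(1 - (s : ℝ)) * t| = |1 - (s : ℝ)| * |t| := abs_mul _ _
        _ ≤ 1 * |t| := by
            apply mul_le_mul_of_nonneg_right _ (abs_nonneg t)
            rw [abs_le]
            constructor <;> nlinarith [s.2.1, s.2.2]
        _ = |t| := one_mul _
        _ < ‖x‖ := hp'
    -- step 2: move in space at time 0
    have h2 : JoinedIn S ((0 : ℝ), x) ((0 : ℝ), x₀) := by
      obtain ⟨γ, hγ⟩ := hcompl.joinedIn x hx x₀ hx₀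
      refine ⟨γ.map (f := fun y => ((0 : ℝ), y)) (by continuity), fun s => ?_⟩
      show |(0 : ℝ)| < ‖γ s‖
      simpa [norm_pos_iff] using hγ s
    exact (h1.trans h2).symm
end
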